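/- arXiv:math/9409206 — 4 statements merged into one kernel-verified Lean document; each statement's English description precedes it below -/
import Mathlib

section
/- For every n ≥ 1, the dead end graph D is B_n-free. -/
open SimpleGraph

/-- `H` is isomorphic to a (not necessarily induced) subgraph of `G`:
    there is an injective graph homomorphism from `H` to `G`. -/
def IsSubgraphOf {V W : Type*} (H : SimpleGraph V) (G : SimpleGraph W) : Prop :=
  ∃ f : H →g G, Function.Injective f

/-- `G` is `F`-free: no subgraph of `G` (not necessarily induced) is isomorphic to `F`. -/
def GraphFree {V W : Type*} (F : SimpleGraph V) (G : SimpleGraph W) : Prop :=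
  ¬ IsSubgraphOf F G

/-- The `n`-bridge `B_n`. Vertices: `0 = a`, `1 = b`, `2 = c`,
    `3,…,n+2 = x₁,…,xₙ`, `n+3 = d`, `n+4 = e`.  Edges: `(a,c)`, `(b,c)`,
    `(c,x₁)`, `(xᵢ,xᵢ₊₁)` for `1 ≤ i < n`, `(xₙ,d)`, `(xₙ,e)`. -/
def Bridge (n : ℕ) : SimpleGraph (Fin (n + 5)) :=
  SimpleGraph.fromRel (fun u v =>
    ((u : ℕ) = 0 ∧ (v : ℕ) = 2) ∨ ((u : ℕ) = 1 ∧ (v : ℕ) = 2) ∨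
    (2 ≤ (u : ℕ) ∧ (u : ℕ) < n + 2 ∧ (v : ℕ) = (u : ℕ) + 1) ∨
    ((u : ℕ) = n + 2 ∧ (v : ℕ) = n + 3) ∨ ((u : ℕ) = n + 2 ∧ (v : ℕ) = n + 4))

/-- The dead end `D` (for parameter `n`): the complete graph `K_{n+3}` on the vertices
    `0,…,n+2` (so `kᵢ = i-1` and `k_{n+3} = p₀ = n+2`) together with a freely adjoined
    simple path `p₀,p₁,…,p_{n+1} = n+2,n+3,…,2n+3` of length `n+1`. -/
def DeadEnd (n : ℕ) : SimpleGraph (Fin (2 * n + 4)) :=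
  SimpleGraph.fromRel (fun u v =>
    ((u : ℕ) < n + 3 ∧ (v : ℕ) < n + 3 ∧ u ≠ v) ∨
    (n + 2 ≤ (u : ℕ) ∧ (u : ℕ) < 2 * n + 3 ∧ (v : ℕ) = (u : ℕ) + 1))

/-! Auxiliary definitions and lemmas -/

/-- Path vertices of the bridge: `bp n i` is `x_i` (with `bp n 0 = c`), clamped at `n`. -/
def bp (n : ℕ) (i : ℕ) : Fin (n + 5) := ⟨2 + min i n, by omega⟩

def bA (n : ℕ) : Fin (n + 5) := ⟨0, by omega⟩
def bB (n : ℕ) : Fin (n + 5) := ⟨1, by omega⟩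
def bD (n : ℕ) : Fin (n + 5) := ⟨n + 3, by omega⟩
def bE (n : ℕ) : Fin (n + 5) := ⟨n + 4, by omega⟩

lemma bp_val {n i : ℕ} (h : i ≤ n) : ((bp n i : Fin (n + 5)) : ℕ) = 2 + i := by
  show 2 + min i n = 2 + i
  rw [min_eq_left h]

lemma bA_val (n : ℕ) : ((bA n : Fin (n + 5)) : ℕ) = 0 := rfl
lemma bB_val (n : ℕ) : ((bB n : Fin (n + 5)) : ℕ) = 1 := rfl
lemma bD_val (n : ℕ) : ((bD n : Fin (n + 5)) : ℕ) = n + 3 := rfl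
lemma bE_val (n : ℕ) : ((bE n : Fin (n + 5)) : ℕ) = n + 4 := rfl

lemma bridge_adj_of {n : ℕ} {u v : Fin (n + 5)}
    (h : ((u : ℕ) = 0 ∧ (v : ℕ) = 2) ∨ ((u : ℕ) = 1 ∧ (v : ℕ) = 2) ∨
      (2 ≤ (u : ℕ) ∧ (u : ℕ) < n + 2 ∧ (v : ℕ) = (u : ℕ) + 1) ∨
      ((u : ℕ) = n + 2 ∧ (v : ℕ) = n + 3) ∨ ((u : ℕ) = n + 2 ∧ (v : ℕ) = n + 4)) :
    (Bridge n).Adj u v := by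
  rw [Bridge, SimpleGraph.fromRel_adj]
  exact ⟨fun e => by rw [e] at h; omega, Or.inl h⟩

lemma bridge_adj_path {n i : ℕ} (h : i < n) : (Bridge n).Adj (bp n i) (bp n (i + 1)) := by
  apply bridge_adj_of
  rw [bp_val (le_of_lt h), bp_val h]
  omega

/-- In the dead end, an edge from the clique to the tail must be the edge `(n+2, n+3)`. -/
lemma deadEnd_cross {n : ℕ} {u v : Fin (2 * n + 4)} (h : (DeadEnd n).Adj u v)
    (hu : (u : ℕ) < n + 3) (hv : n + 3 ≤ (v : ℕ)) :
    (u : ℕ) = n + 2 ∧ (v : ℕ) = n + 3 := by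
  rw [DeadEnd, SimpleGraph.fromRel_adj] at h
  obtain ⟨-, h⟩ := h
  rcases h with (⟨h1, h2, -⟩ | ⟨h1, h2, h3⟩) | (⟨h1, h2, -⟩ | ⟨h1, h2, h3⟩) <;> omega

/-- Neighbors of a tail vertex are its path neighbors. -/
lemma deadEnd_tail_nbr {n : ℕ} {u v : Fin (2 * n + 4)} (h : (DeadEnd n).Adj u v)
    (hu : n + 3 ≤ (u : ℕ)) : (v : ℕ) = (u : ℕ) + 1 ∨ (u : ℕ) = (v : ℕ) + 1 := by
  rw [DeadEnd, SimpleGraph.fromRel_adj] at h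
  obtain ⟨-, h⟩ := h
  rcases h with (⟨h1, h2, -⟩ | ⟨h1, h2, h3⟩) | (⟨h1, h2, -⟩ | ⟨h1, h2, h3⟩) <;> omega

/-- A tail vertex has no three distinct neighbors. -/
lemma deadEnd_tail_not_three {n : ℕ} {w a b c : Fin (2 * n + 4)} (hw : n + 3 ≤ (w : ℕ))
    (ha : (DeadEnd n).Adj w a) (hb : (DeadEnd n).Adj w b) (hc : (DeadEnd n).Adj w c)
    (hab : a ≠ b) (hac : a ≠ c) (hbc : b ≠ c) : False := by
  have h1 := deadEnd_tail_nbr ha hw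
  have h2 := deadEnd_tail_nbr hb hw
  have h3 := deadEnd_tail_nbr hc hw
  have e1 : (a : ℕ) ≠ (b : ℕ) := fun h => hab (Fin.ext h)
  have e2 : (a : ℕ) ≠ (c : ℕ) := fun h => hac (Fin.ext h)
  have e3 : (b : ℕ) ≠ (c : ℕ) := fun h => hbc (Fin.ext h)
  omega

/-- For every `n ≥ 1`, the dead end graph is `B_n`-free. -/
theorem deadEnd_bridgeFree (n : ℕ) (hn : 1 ≤ n) : GraphFree (Bridge n) (DeadEnd n) := by
  rintro ⟨f, hf⟩
  have hval : ∀ {u v : Fin (n + 5)}, (f u : ℕ) = (f v : ℕ) → u = v :=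
    fun h => hf (Fin.ext h)
  have hfne : ∀ {u v : Fin (n + 5)}, (u : ℕ) ≠ (v : ℕ) → f u ≠ f v :=
    fun h e => h (congrArg Fin.val (hf e))
  -- adjacency facts in the bridge
  have hAC : (Bridge n).Adj (bA n) (bp n 0) :=
    bridge_adj_of (by rw [bA_val, bp_val (Nat.zero_le n)]; omega)
  have hBC : (Bridge n).Adj (bB n) (bp n 0) :=
    bridge_adj_of (by rw [bB_val, bp_val (Nat.zero_le n)]; omega)
  have hXD : (Bridge n).Adj (bp n n) (bD n) :=
    bridge_adj_of (by rw [bD_val, bp_val (le_refl n)]; omega)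
  have hXE : (Bridge n).Adj (bp n n) (bE n) :=
    bridge_adj_of (by rw [bE_val, bp_val (le_refl n)]; omega)
  have hC1 : (Bridge n).Adj (bp n 0) (bp n 1) := bridge_adj_path (by omega)
  have hPX : (Bridge n).Adj (bp n (n - 1)) (bp n n) := by
    have h := bridge_adj_path (n := n) (i := n - 1) (by omega)
    rwa [show n - 1 + 1 = n from by omega] at h
  -- the image of `c` lies in the clique
  have hCK : (f (bp n 0) : ℕ) < n + 3 := by
    by_contra h
    push_neg at h
    exact deadEnd_tail_not_three h (f.map_adj hAC.symm) (f.map_adj hBC.symm) (f.map_adj hC1)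
      (hfne (by rw [bA_val, bB_val]; omega))
      (hfne (by rw [bA_val, bp_val hn]; omega))
      (hfne (by rw [bB_val, bp_val hn]; omega))
  -- the image of `x_n` lies in the clique
  have hXK : (f (bp n n) : ℕ) < n + 3 := by
    by_contra h
    push_neg at h
    exact deadEnd_tail_not_three h (f.map_adj hXD) (f.map_adj hXE) (f.map_adj hPX.symm)
      (hfne (by rw [bD_val, bE_val]; omega))
      (hfne (by rw [bD_val, bp_val (by omega : n - 1 ≤ n)]; omega))
      (hfne (by rw [bE_val, bp_val (by omega : n - 1 ≤ n)]; omega))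
  -- all path vertices map into the clique
  have key : ∀ i ≤ n, (f (bp n i) : ℕ) < n + 3 := by
    by_contra hcon
    push_neg at hcon
    obtain ⟨i, hi, hfi⟩ := hcon
    set S : Finset ℕ := (Finset.range (n + 1)).filter (fun j => n + 3 ≤ (f (bp n j) : ℕ))
      with hS
    have hiS : i ∈ S := by
      rw [hS, Finset.mem_filter, Finset.mem_range]
      exact ⟨by omega, hfi⟩
    have hne : S.Nonempty := ⟨i, hiS⟩
    set i0 := S.min' hne with hi0
    set i1 := S.max' hne with hi1
    have hi0min : ∀ j ∈ S, i0 ≤ j := fun j hj => S.min'_le j hj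
    have hi1max : ∀ j ∈ S, j ≤ i1 := fun j hj => S.le_max' j hj
    have hi0memS : i0 ∈ S := S.min'_mem hne
    have hi1memS : i1 ∈ S := S.max'_mem hne
    have h01 : i0 ≤ i1 := hi0min _ hi1memS
    have hi0S := hi0memS
    have hi1S := hi1memS
    simp only [hS, Finset.mem_filter, Finset.mem_range] at hi0S hi1S
    have h0 : 1 ≤ i0 := by
      rcases Nat.eq_zero_or_pos i0 with h | h
      · rw [h] at hi0S; omega
      · exact h
    have h1 : i1 < n := by
      rcases Nat.lt_or_ge i1 n with h | h
      · exact h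
      · have : i1 = n := by omega
        rw [this] at hi1S; omega
    have hm : (f (bp n (i0 - 1)) : ℕ) < n + 3 := by
      by_contra h'
      push_neg at h'
      have : i0 - 1 ∈ S := by
        rw [hS, Finset.mem_filter, Finset.mem_range]
        exact ⟨by omega, h'⟩
      have := hi0min _ this
      omega
    have hp : (f (bp n (i1 + 1)) : ℕ) < n + 3 := by
      by_contra h'
      push_neg at h'
      have : i1 + 1 ∈ S := by
        rw [hS, Finset.mem_filter, Finset.mem_range]
        exact ⟨by omega, h'⟩
      have := hi1max _ this
      omega
    have ha : (Bridge n).Adj (bp n (i0 - 1)) (bp n i0) := by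
      have h := bridge_adj_path (n := n) (i := i0 - 1) (by omega)
      rwa [show i0 - 1 + 1 = i0 from by omega] at h
    have hb : (Bridge n).Adj (bp n i1) (bp n (i1 + 1)) := bridge_adj_path h1
    have e0 : (f (bp n (i0 - 1)) : ℕ) = n + 2 :=
      (deadEnd_cross (f.map_adj ha) hm hi0S.2).1
    have e1 : (f (bp n (i1 + 1)) : ℕ) = n + 2 :=
      (deadEnd_cross (f.map_adj hb).symm hp hi1S.2).1
    have heq := congrArg Fin.val (hval (e0.trans e1.symm))
    rw [bp_val (by omega : i0 - 1 ≤ n), bp_val (by omega : i1 + 1 ≤ n)] at heq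
    omega
  -- every vertex maps to value at most `n+3`
  have crossK : ∀ {u v : Fin (n + 5)}, (Bridge n).Adj u v → (f u : ℕ) < n + 3 →
      (f v : ℕ) ≤ n + 3 := by
    intro u v h hu
    rcases Nat.lt_or_ge ((f v : ℕ)) (n + 3) with h' | h'
    · omega
    · exact le_of_eq (deadEnd_cross (f.map_adj h) hu h').2
  have hall : ∀ v : Fin (n + 5), (f v : ℕ) ≤ n + 3 := by
    intro v
    have hv := v.isLt
    rcases (by omega : (v : ℕ) = 0 ∨ (v : ℕ) = 1 ∨ (2 ≤ (v : ℕ) ∧ (v : ℕ) < n + 3) ∨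
        (v : ℕ) = n + 3 ∨ (v : ℕ) = n + 4) with h | h | ⟨h, h'⟩ | h | h
    · have : v = bA n := Fin.ext (by rw [bA_val, h])
      rw [this]; exact crossK hAC.symm hCK
    · have : v = bB n := Fin.ext (by rw [bB_val, h])
      rw [this]; exact crossK hBC.symm hCK
    · have : v = bp n ((v : ℕ) - 2) := Fin.ext (by rw [bp_val (by omega : (v:ℕ) - 2 ≤ n)]; omega)
      rw [this]
      exact le_of_lt (key _ (by omega))
    · have : v = bD n := Fin.ext (by rw [bD_val, h])
      rw [this]; exact crossK hXD hXK
    · have : v = bE n := Fin.ext (by rw [bE_val, h])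
      rw [this]; exact crossK hXE hXK
  -- pigeonhole: `n+5` distinct values all at most `n+3`
  have hinj : Function.Injective
      (fun v : Fin (n + 5) => (⟨(f v : ℕ), by have := hall v; omega⟩ : Fin (n + 4))) := by
    intro u v h
    have := congrArg Fin.val h
    simp only [Fin.val_mk] at this
    exact hval this
  have hcard := Fintype.card_le_of_injective _ hinj
  simp only [Fintype.card_fin] at hcard
  omega
end

section
/- For every n ≥ 1, if a dead end D with vertices k_1, …, k_{n+3} = p_0, p_1, …, p_{n+1} is a subgraph of a B_n-free graph G, then deg_D(v) = deg_G(v) for every vertex v of D except possibly v = p_{n+1}. -/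
open SimpleGraph

set_option maxHeartbeats 1000000

section Aux

lemma dadj {n : ℕ} {x y : Fin (2*n+4)} (hne : (x:ℕ) ≠ (y:ℕ))
    (h : ((x:ℕ) < n+3 ∧ (y:ℕ) < n+3) ∨ (n+2 ≤ (x:ℕ) ∧ (y:ℕ) = (x:ℕ)+1) ∨
      (n+2 ≤ (y:ℕ) ∧ (x:ℕ) = (y:ℕ)+1)) : (DeadEnd n).Adj x y := by
  have hxy : x ≠ y := fun h' => hne (by rw [h'])
  rw [DeadEnd, fromRel_adj]
  refine ⟨hxy, ?_⟩
  have hx := x.isLt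
  have hy := y.isLt
  rcases h with ⟨h1, h2⟩ | ⟨h1, h2⟩ | ⟨h1, h2⟩
  · exact Or.inl (Or.inl ⟨h1, h2, hxy⟩)
  · exact Or.inl (Or.inr ⟨h1, by omega, h2⟩)
  · exact Or.inr (Or.inr ⟨h1, by omega, h2⟩)

lemma bridge_sub {n : ℕ} {V : Type*} {G : SimpleGraph V} (g : Fin (n+5) → V)
    (hinj : Function.Injective g)
    (h02 : ∀ a b : Fin (n+5), (a:ℕ) = 0 → (b:ℕ) = 2 → G.Adj (g a) (g b))
    (h12 : ∀ a b : Fin (n+5), (a:ℕ) = 1 → (b:ℕ) = 2 → G.Adj (g a) (g b))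
    (hpath : ∀ a b : Fin (n+5), 2 ≤ (a:ℕ) → (a:ℕ) < n+2 → (b:ℕ) = (a:ℕ)+1 → G.Adj (g a) (g b))
    (hd : ∀ a b : Fin (n+5), (a:ℕ) = n+2 → (b:ℕ) = n+3 → G.Adj (g a) (g b))
    (he : ∀ a b : Fin (n+5), (a:ℕ) = n+2 → (b:ℕ) = n+4 → G.Adj (g a) (g b)) :
    IsSubgraphOf (Bridge n) G := by
  refine ⟨⟨g, ?_⟩, hinj⟩
  intro a b hab
  rw [Bridge, fromRel_adj] at hab
  obtain ⟨hne, h | h⟩ := hab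
  · rcases h with ⟨h1, h2⟩ | ⟨h1, h2⟩ | ⟨h1, h2, h3⟩ | ⟨h1, h2⟩ | ⟨h1, h2⟩
    exacts [h02 a b h1 h2, h12 a b h1 h2, hpath a b h1 h2 h3, hd a b h1 h2, he a b h1 h2]
  · rcases h with ⟨h1, h2⟩ | ⟨h1, h2⟩ | ⟨h1, h2, h3⟩ | ⟨h1, h2⟩ | ⟨h1, h2⟩
    exacts [(h02 b a h1 h2).symm, (h12 b a h1 h2).symm, (hpath b a h1 h2 h3).symm,
      (hd b a h1 h2).symm, (he b a h1 h2).symm]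

/-- The swap of a clique vertex `v ≤ n+1` with the clique vertex `n+1` is an
automorphism-like injective endomorphism of the dead end. -/
lemma swapHom {n : ℕ} (v : Fin (2*n+4)) (hv : (v:ℕ) ≤ n+1) :
    ∃ σ : DeadEnd n →g DeadEnd n, Function.Injective ⇑σ ∧ σ ⟨n+1, by omega⟩ = v ∧
      ∀ u : Fin (2*n+4), σ u = u ∨ ((σ u : ℕ) ≤ n+1 ∧ (u:ℕ) ≤ n+1) := by
  have hn1 : (n+1 : ℕ) < 2*n+4 := by omega
  set e := Equiv.swap v (⟨n+1, hn1⟩ : Fin (2*n+4)) with he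
  have hval : ∀ u : Fin (2*n+4), e u = u ∨ ((e u : ℕ) ≤ n+1 ∧ (u:ℕ) ≤ n+1) := by
    intro u
    rcases eq_or_ne u v with rfl | h1
    · right
      rw [he, Equiv.swap_apply_left]
      exact ⟨le_refl _, hv⟩
    · rcases eq_or_ne u ⟨n+1, hn1⟩ with rfl | h2
      · right
        rw [he, Equiv.swap_apply_right]
        exact ⟨hv, le_refl _⟩
      · left
        rw [he, Equiv.swap_apply_of_ne_of_ne h1 h2]
  refine ⟨⟨⇑e, ?_⟩, e.injective, Equiv.swap_apply_right _ _, hval⟩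
  intro x y hxy
  rw [DeadEnd, fromRel_adj] at hxy
  obtain ⟨hne, hrel⟩ := hxy
  have hx2 : ((e x : ℕ) = (x:ℕ)) ∨ ((e x : ℕ) ≤ n+1 ∧ (x:ℕ) ≤ n+1) := by
    rcases hval x with h | h
    · exact Or.inl (by rw [h])
    · exact Or.inr h
  have hy2 : ((e y : ℕ) = (y:ℕ)) ∨ ((e y : ℕ) ≤ n+1 ∧ (y:ℕ) ≤ n+1) := by
    rcases hval y with h | h
    · exact Or.inl (by rw [h])
    · exact Or.inr h
  have hvne : (e x : ℕ) ≠ (e y : ℕ) := by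
    intro h
    exact hne (e.injective (Fin.ext h))
  have hxlt := x.isLt
  have hylt := y.isLt
  apply dadj hvne
  rcases hrel with (⟨h1, h2, -⟩ | ⟨h1, h2, h3⟩) | (⟨h1, h2, -⟩ | ⟨h1, h2, h3⟩) <;> omega

end Aux

section Maps

/-- vertex map for the case: extra neighbour `w` at the clique vertex `n+1`. -/
def c1m (n k : ℕ) : ℕ :=
  if k = 0 then n+3 else if k = 1 then 0 else if k = 2 then n+2
  else if k ≤ n+1 then k-2 else if k = n+2 then n+1 else n

def C1Spec (n k m : ℕ) : Prop :=
  (k = 0 ∧ m = n+3) ∨ (k = 1 ∧ m = 0) ∨ (k = 2 ∧ m = n+2) ∨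
  (3 ≤ k ∧ k ≤ n+1 ∧ m+2 = k) ∨ (k = n+2 ∧ 3 ≤ k ∧ m = n+1) ∨ (n+3 ≤ k ∧ m = n)

lemma c1spec (n k : ℕ) : C1Spec n k (c1m n k) := by
  have h : ∀ m, m = c1m n k → C1Spec n k m := by
    intro m hm
    unfold c1m at hm
    unfold C1Spec
    split_ifs at hm <;> omega
  exact h _ rfl

/-- vertex map for the case: extra neighbour `w` at the clique vertex `p₀ = n+2`. -/
def c2m (n k : ℕ) : ℕ := if k ≤ n+2 then k else n+3

def C2Spec (n k m : ℕ) : Prop := (k ≤ n+2 ∧ m = k) ∨ (n+3 ≤ k ∧ m = n+3)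

lemma c2spec (n k : ℕ) : C2Spec n k (c2m n k) := by
  have h : ∀ m, m = c2m n k → C2Spec n k m := by
    intro m hm
    unfold c2m at hm
    unfold C2Spec
    split_ifs at hm <;> omega
  exact h _ rfl

/-- vertex map for the case: extra neighbour `w` at the path vertex `p_j = n+2+j`,
`1 ≤ j ≤ n`. -/
def c4m (n j k : ℕ) : ℕ :=
  if k = 0 then 0 else if k = 1 then n+3+j else if k = 2 then n+2+j
  else if k ≤ j+2 then n+4+j-k else if k ≤ n+2 then k-j-3
  else if k = n+3 then n-j else n-j+1

def C4Spec (n j k m : ℕ) : Prop :=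
  (k = 0 ∧ m = 0) ∨ (k = 1 ∧ m = n+3+j) ∨ (k = 2 ∧ m = n+2+j) ∨
  (3 ≤ k ∧ k ≤ j+2 ∧ m+k = n+4+j) ∨ (3 ≤ k ∧ j+3 ≤ k ∧ k ≤ n+2 ∧ m+j+3 = k) ∨
  (k = n+3 ∧ m+j = n) ∨ (k = n+4 ∧ m+j = n+1)

lemma c4spec (n j k : ℕ) (hj : 1 ≤ j) (hj2 : j ≤ n) (hk : k < n+5) : C4Spec n j k (c4m n j k) := by
  have h : ∀ m, m = c4m n j k → C4Spec n j k m := by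
    intro m hm
    unfold c4m at hm
    unfold C4Spec
    split_ifs at hm <;> omega
  exact h _ rfl

/-- vertex map for a chord between the clique vertex `u ∈ {n+1, n+2}`
and the path vertex `p_j`. -/
def l5m (n u j k : ℕ) : ℕ :=
  if k = 0 then n+1+j else if k = 1 then n+3+j else if k = 2 then n+2+j
  else if k = 3 then u else if k ≤ n+2 then k-4
  else if k = n+3 then n-1 else n

def L5Spec (n u j k m : ℕ) : Prop :=
  (k = 0 ∧ m = n+1+j) ∨ (k = 1 ∧ m = n+3+j) ∨ (k = 2 ∧ m = n+2+j) ∨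
  (k = 3 ∧ m = u) ∨ (4 ≤ k ∧ k ≤ n+2 ∧ m+4 = k) ∨ (k = n+3 ∧ m+1 = n) ∨
  (k = n+4 ∧ m = n)

lemma l5spec (n u j k : ℕ) (hn : 1 ≤ n) (hk : k < n+5) : L5Spec n u j k (l5m n u j k) := by
  have h : ∀ m, m = l5m n u j k → L5Spec n u j k m := by
    intro m hm
    unfold l5m at hm
    unfold L5Spec
    split_ifs at hm <;> omega
  exact h _ rfl

/-- vertex map for a chord between path vertices `p_i` and `p_j`, `1 ≤ i`, `i+2 ≤ j ≤ n`. -/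
def l6m (n i j k : ℕ) : ℕ :=
  if k = 0 then n+3+j else if k = 1 then n+1+j else if k = 2 then n+2+j
  else if k ≤ i+3 then n+5+i-k else if k ≤ n+2 then k-i-4
  else if k = n+3 then n-i-1 else n-i

def L6Spec (n i j k m : ℕ) : Prop :=
  (k = 0 ∧ m = n+3+j) ∨ (k = 1 ∧ m = n+1+j) ∨ (k = 2 ∧ m = n+2+j) ∨
  (3 ≤ k ∧ k ≤ i+3 ∧ m+k = n+5+i) ∨ (i+4 ≤ k ∧ k ≤ n+2 ∧ m+i+4 = k) ∨
  (k = n+3 ∧ m+i+1 = n) ∨ (k = n+4 ∧ m+i = n)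

lemma l6spec (n i j k : ℕ) (hi : 1 ≤ i) (hij : i+2 ≤ j) (hj : j ≤ n) (hk : k < n+5) :
    L6Spec n i j k (l6m n i j k) := by
  have h : ∀ m, m = l6m n i j k → L6Spec n i j k m := by
    intro m hm
    unfold l6m at hm
    unfold L6Spec
    split_ifs at hm <;> omega
  exact h _ rfl

end Maps


section Constructions

variable {n : ℕ} {V : Type*} {G : SimpleGraph V}

lemma c1 (hn : 1 ≤ n) (f : DeadEnd n →g G) (hf : Function.Injective f) (w : V)
    (hw : G.Adj (f ⟨n+1, by omega⟩) w)
    (hfresh : ∀ u : Fin (2*n+4), (u:ℕ) ≤ n+3 → w ≠ f u) :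
    IsSubgraphOf (Bridge n) G := by
  have hbd : ∀ k : ℕ, k < n+5 → c1m n k < 2*n+4 := by
    intro k hk
    have := c1spec n k
    unfold C1Spec at this
    omega
  refine bridge_sub (fun k => if (k:ℕ) = n+3 then w else f ⟨c1m n (k:ℕ), hbd _ k.isLt⟩)
    ?_ ?_ ?_ ?_ ?_ ?_
  · intro a b hab
    have ha := a.isLt
    have hb := b.isLt
    have sa := c1spec n (a:ℕ)
    have sb := c1spec n (b:ℕ)
    unfold C1Spec at sa sb
    simp only at hab
    split_ifs at hab with h1 h2 h2
    · exact Fin.ext (by (try simp only [Fin.val_mk]) <;> omega)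
    · exact absurd hab (hfresh _ (by (try simp only [Fin.val_mk]) <;> omega))
    · exact absurd hab.symm (hfresh _ (by (try simp only [Fin.val_mk]) <;> omega))
    · have h3 := hf hab
      rw [Fin.mk.injEq] at h3
      exact Fin.ext (by (try simp only [Fin.val_mk]) <;> omega)
  · intro a b ha hb
    simp only [ha, hb]
    rw [if_neg (by omega), if_neg (by omega)]
    have s1 := c1spec n 0
    have s2 := c1spec n 2
    unfold C1Spec at s1 s2
    exact f.map_adj (dadj (by (try simp only [Fin.val_mk]) <;> omega)
      (by (try simp only [Fin.val_mk]) <;> omega))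
  · intro a b ha hb
    simp only [ha, hb]
    rw [if_neg (by omega), if_neg (by omega)]
    have s1 := c1spec n 1
    have s2 := c1spec n 2
    unfold C1Spec at s1 s2
    exact f.map_adj (dadj (by (try simp only [Fin.val_mk]) <;> omega)
      (by (try simp only [Fin.val_mk]) <;> omega))
  · intro a b h2a hlt hb
    simp only [hb]
    rw [if_neg (by omega), if_neg (by omega)]
    have s1 := c1spec n (a:ℕ)
    have s2 := c1spec n ((a:ℕ)+1)
    unfold C1Spec at s1 s2
    exact f.map_adj (dadj (by (try simp only [Fin.val_mk]) <;> omega)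
      (by (try simp only [Fin.val_mk]) <;> omega))
  · intro a b ha hb
    simp only [ha, hb]
    rw [if_neg (by omega), if_pos trivial]
    have s1 := c1spec n (n+2)
    unfold C1Spec at s1
    have hkey : (⟨c1m n (n+2), hbd _ (by omega)⟩ : Fin (2*n+4)) = ⟨n+1, by omega⟩ :=
      Fin.ext (by (try simp only [Fin.val_mk]) <;> omega)
    rw [hkey]
    exact hw
  · intro a b ha hb
    simp only [ha, hb]
    rw [if_neg (by omega), if_neg (by omega)]
    have s1 := c1spec n (n+2)
    have s2 := c1spec n (n+4)
    unfold C1Spec at s1 s2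
    exact f.map_adj (dadj (by (try simp only [Fin.val_mk]) <;> omega)
      (by (try simp only [Fin.val_mk]) <;> omega))



lemma c2 (hn : 1 ≤ n) (f : DeadEnd n →g G) (hf : Function.Injective f) (w : V)
    (hw : G.Adj (f ⟨n+2, by omega⟩) w)
    (hfresh : ∀ u : Fin (2*n+4), (u:ℕ) ≤ n+3 → w ≠ f u) :
    IsSubgraphOf (Bridge n) G := by
  have hbd : ∀ k : ℕ, k < n+5 → c2m n k < 2*n+4 := by
    intro k hk
    have := c2spec n k
    unfold C2Spec at this
    omega
  refine bridge_sub (fun k => if (k:ℕ) = n+3 then w else f ⟨c2m n (k:ℕ), hbd _ k.isLt⟩)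
    ?_ ?_ ?_ ?_ ?_ ?_
  · intro a b hab
    have ha := a.isLt
    have hb := b.isLt
    have sa := c2spec n (a:ℕ)
    have sb := c2spec n (b:ℕ)
    unfold C2Spec at sa sb
    simp only at hab
    split_ifs at hab with h1 h2 h2
    · exact Fin.ext (by (try simp only [Fin.val_mk]) <;> omega)
    · exact absurd hab (hfresh _ (by (try simp only [Fin.val_mk]) <;> omega))
    · exact absurd hab.symm (hfresh _ (by (try simp only [Fin.val_mk]) <;> omega))
    · have h3 := hf hab
      rw [Fin.mk.injEq] at h3
      exact Fin.ext (by (try simp only [Fin.val_mk]) <;> omega)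
  · intro a b ha hb
    simp only [ha, hb]
    rw [if_neg (by omega), if_neg (by omega)]
    have s1 := c2spec n 0
    have s2 := c2spec n 2
    unfold C2Spec at s1 s2
    exact f.map_adj (dadj (by (try simp only [Fin.val_mk]) <;> omega)
      (by (try simp only [Fin.val_mk]) <;> omega))
  · intro a b ha hb
    simp only [ha, hb]
    rw [if_neg (by omega), if_neg (by omega)]
    have s1 := c2spec n 1
    have s2 := c2spec n 2
    unfold C2Spec at s1 s2
    exact f.map_adj (dadj (by (try simp only [Fin.val_mk]) <;> omega)
      (by (try simp only [Fin.val_mk]) <;> omega))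
  · intro a b h2a hlt hb
    simp only [hb]
    rw [if_neg (by omega), if_neg (by omega)]
    have s1 := c2spec n (a:ℕ)
    have s2 := c2spec n ((a:ℕ)+1)
    unfold C2Spec at s1 s2
    exact f.map_adj (dadj (by (try simp only [Fin.val_mk]) <;> omega)
      (by (try simp only [Fin.val_mk]) <;> omega))
  · intro a b ha hb
    simp only [ha, hb]
    rw [if_neg (by omega), if_pos trivial]
    have s1 := c2spec n (n+2)
    unfold C2Spec at s1
    have hkey : (⟨c2m n (n+2), hbd _ (by omega)⟩ : Fin (2*n+4)) = ⟨n+2, by omega⟩ :=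
      Fin.ext (by (try simp only [Fin.val_mk]) <;> omega)
    rw [hkey]
    exact hw
  · intro a b ha hb
    simp only [ha, hb]
    rw [if_neg (by omega), if_neg (by omega)]
    have s1 := c2spec n (n+2)
    have s2 := c2spec n (n+4)
    unfold C2Spec at s1 s2
    exact f.map_adj (dadj (by (try simp only [Fin.val_mk]) <;> omega)
      (by (try simp only [Fin.val_mk]) <;> omega))

lemma c4 (hn : 1 ≤ n) (f : DeadEnd n →g G) (hf : Function.Injective f)
    (j : ℕ) (hj1 : 1 ≤ j) (hj2 : j ≤ n) (w : V)
    (hw : G.Adj (f ⟨n+2+j, by omega⟩) w)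
    (hfresh : ∀ u : Fin (2*n+4), (u:ℕ) ≤ n+3+j → w ≠ f u) :
    IsSubgraphOf (Bridge n) G := by
  have hbd : ∀ k : ℕ, k < n+5 → c4m n j k < 2*n+4 := by
    intro k hk
    have := c4spec n j k hj1 hj2 hk
    unfold C4Spec at this
    omega
  refine bridge_sub (fun k => if (k:ℕ) = 0 then w else f ⟨c4m n j (k:ℕ), hbd _ k.isLt⟩)
    ?_ ?_ ?_ ?_ ?_ ?_
  · intro a b hab
    have ha := a.isLt
    have hb := b.isLt
    have sa := c4spec n j (a:ℕ) hj1 hj2 ha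
    have sb := c4spec n j (b:ℕ) hj1 hj2 hb
    unfold C4Spec at sa sb
    simp only at hab
    split_ifs at hab with h1 h2 h2
    · exact Fin.ext (by (try simp only [Fin.val_mk]) <;> omega)
    · exact absurd hab (hfresh _ (by (try simp only [Fin.val_mk]) <;> omega))
    · exact absurd hab.symm (hfresh _ (by (try simp only [Fin.val_mk]) <;> omega))
    · have h3 := hf hab
      rw [Fin.mk.injEq] at h3
      exact Fin.ext (by (try simp only [Fin.val_mk]) <;> omega)
  · intro a b ha hb
    beta_reduce
    rw [if_pos ha, if_neg (by omega)]
    have s2 := c4spec n j (b:ℕ) hj1 hj2 b.isLt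
    unfold C4Spec at s2
    have hkey : (⟨c4m n j (b:ℕ), hbd _ b.isLt⟩ : Fin (2*n+4)) = ⟨n+2+j, by omega⟩ :=
      Fin.ext (by (try simp only [Fin.val_mk]) <;> omega)
    rw [hkey]
    exact hw.symm
  · intro a b ha hb
    beta_reduce
    rw [if_neg (by omega), if_neg (by omega)]
    have s1 := c4spec n j (a:ℕ) hj1 hj2 a.isLt
    have s2 := c4spec n j (b:ℕ) hj1 hj2 b.isLt
    unfold C4Spec at s1 s2
    exact f.map_adj (dadj (by (try simp only [Fin.val_mk]) <;> omega)
      (by (try simp only [Fin.val_mk]) <;> omega))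
  · intro a b h2a hlt hb
    beta_reduce
    rw [if_neg (by omega), if_neg (by omega)]
    have s1 := c4spec n j (a:ℕ) hj1 hj2 a.isLt
    have s2 := c4spec n j (b:ℕ) hj1 hj2 b.isLt
    unfold C4Spec at s1 s2
    exact f.map_adj (dadj (by (try simp only [Fin.val_mk]) <;> omega)
      (by (try simp only [Fin.val_mk]) <;> omega))
  · intro a b ha hb
    beta_reduce
    rw [if_neg (by omega), if_neg (by omega)]
    have s1 := c4spec n j (a:ℕ) hj1 hj2 a.isLt
    have s2 := c4spec n j (b:ℕ) hj1 hj2 b.isLt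
    unfold C4Spec at s1 s2
    exact f.map_adj (dadj (by (try simp only [Fin.val_mk]) <;> omega)
      (by (try simp only [Fin.val_mk]) <;> omega))
  · intro a b ha hb
    beta_reduce
    rw [if_neg (by omega), if_neg (by omega)]
    have s1 := c4spec n j (a:ℕ) hj1 hj2 a.isLt
    have s2 := c4spec n j (b:ℕ) hj1 hj2 b.isLt
    unfold C4Spec at s1 s2
    exact f.map_adj (dadj (by (try simp only [Fin.val_mk]) <;> omega)
      (by (try simp only [Fin.val_mk]) <;> omega))

lemma l5 (hn : 1 ≤ n) (f : DeadEnd n →g G) (hf : Function.Injective f)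
    (u : Fin (2*n+4)) (j : ℕ) (hu1 : n+1 ≤ (u:ℕ)) (hu2 : (u:ℕ) ≤ n+2)
    (hj1 : 1 ≤ j) (hj2 : j ≤ n) (hx : ¬((u:ℕ) = n+2 ∧ j = 1))
    (hadj : G.Adj (f u) (f ⟨n+2+j, by omega⟩)) :
    IsSubgraphOf (Bridge n) G := by
  have hbd : ∀ k : ℕ, k < n+5 → l5m n (u:ℕ) j k < 2*n+4 := by
    intro k hk
    have := l5spec n (u:ℕ) j k hn hk
    unfold L5Spec at this
    omega
  refine bridge_sub (fun k => f ⟨l5m n (u:ℕ) j (k:ℕ), hbd _ k.isLt⟩) ?_ ?_ ?_ ?_ ?_ ?_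
  · intro a b hab
    have ha := a.isLt
    have hb := b.isLt
    have sa := l5spec n (u:ℕ) j (a:ℕ) hn ha
    have sb := l5spec n (u:ℕ) j (b:ℕ) hn hb
    unfold L5Spec at sa sb
    have h3 := hf hab
    rw [Fin.mk.injEq] at h3
    exact Fin.ext (by (try simp only [Fin.val_mk]) <;> omega)
  · intro a b ha hb
    have s1 := l5spec n (u:ℕ) j (a:ℕ) hn a.isLt
    have s2 := l5spec n (u:ℕ) j (b:ℕ) hn b.isLt
    unfold L5Spec at s1 s2
    exact f.map_adj (dadj (by (try simp only [Fin.val_mk]) <;> omega)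
      (by (try simp only [Fin.val_mk]) <;> omega))
  · intro a b ha hb
    have s1 := l5spec n (u:ℕ) j (a:ℕ) hn a.isLt
    have s2 := l5spec n (u:ℕ) j (b:ℕ) hn b.isLt
    unfold L5Spec at s1 s2
    exact f.map_adj (dadj (by (try simp only [Fin.val_mk]) <;> omega)
      (by (try simp only [Fin.val_mk]) <;> omega))
  · intro a b h2a hlt hb
    have s1 := l5spec n (u:ℕ) j (a:ℕ) hn a.isLt
    have s2 := l5spec n (u:ℕ) j (b:ℕ) hn b.isLt
    unfold L5Spec at s1 s2
    by_cases hc : (a:ℕ) = 2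
    · beta_reduce
      have e1 : (⟨l5m n (u:ℕ) j (a:ℕ), hbd _ a.isLt⟩ : Fin (2*n+4)) = ⟨n+2+j, by omega⟩ :=
        Fin.ext (by (try simp only [Fin.val_mk]) <;> omega)
      have e2 : (⟨l5m n (u:ℕ) j (b:ℕ), hbd _ b.isLt⟩ : Fin (2*n+4)) = u :=
        Fin.ext (by (try simp only [Fin.val_mk]) <;> omega)
      rw [e1, e2]
      exact hadj.symm
    · exact f.map_adj (dadj (by (try simp only [Fin.val_mk]) <;> omega)
        (by (try simp only [Fin.val_mk]) <;> omega))
  · intro a b ha hb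
    have s1 := l5spec n (u:ℕ) j (a:ℕ) hn a.isLt
    have s2 := l5spec n (u:ℕ) j (b:ℕ) hn b.isLt
    unfold L5Spec at s1 s2
    exact f.map_adj (dadj (by (try simp only [Fin.val_mk]) <;> omega)
      (by (try simp only [Fin.val_mk]) <;> omega))
  · intro a b ha hb
    have s1 := l5spec n (u:ℕ) j (a:ℕ) hn a.isLt
    have s2 := l5spec n (u:ℕ) j (b:ℕ) hn b.isLt
    unfold L5Spec at s1 s2
    exact f.map_adj (dadj (by (try simp only [Fin.val_mk]) <;> omega)
      (by (try simp only [Fin.val_mk]) <;> omega))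

lemma l6 (hn : 1 ≤ n) (f : DeadEnd n →g G) (hf : Function.Injective f)
    (i j : ℕ) (hi1 : 1 ≤ i) (hij : i+2 ≤ j) (hj2 : j ≤ n)
    (hadj : G.Adj (f ⟨n+2+i, by omega⟩) (f ⟨n+2+j, by omega⟩)) :
    IsSubgraphOf (Bridge n) G := by
  have hbd : ∀ k : ℕ, k < n+5 → l6m n i j k < 2*n+4 := by
    intro k hk
    have := l6spec n i j k hi1 hij hj2 hk
    unfold L6Spec at this
    omega
  refine bridge_sub (fun k => f ⟨l6m n i j (k:ℕ), hbd _ k.isLt⟩) ?_ ?_ ?_ ?_ ?_ ?_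
  · intro a b hab
    have ha := a.isLt
    have hb := b.isLt
    have sa := l6spec n i j (a:ℕ) hi1 hij hj2 ha
    have sb := l6spec n i j (b:ℕ) hi1 hij hj2 hb
    unfold L6Spec at sa sb
    have h3 := hf hab
    rw [Fin.mk.injEq] at h3
    exact Fin.ext (by (try simp only [Fin.val_mk]) <;> omega)
  · intro a b ha hb
    have s1 := l6spec n i j (a:ℕ) hi1 hij hj2 a.isLt
    have s2 := l6spec n i j (b:ℕ) hi1 hij hj2 b.isLt
    unfold L6Spec at s1 s2
    exact f.map_adj (dadj (by (try simp only [Fin.val_mk]) <;> omega)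
      (by (try simp only [Fin.val_mk]) <;> omega))
  · intro a b ha hb
    have s1 := l6spec n i j (a:ℕ) hi1 hij hj2 a.isLt
    have s2 := l6spec n i j (b:ℕ) hi1 hij hj2 b.isLt
    unfold L6Spec at s1 s2
    exact f.map_adj (dadj (by (try simp only [Fin.val_mk]) <;> omega)
      (by (try simp only [Fin.val_mk]) <;> omega))
  · intro a b h2a hlt hb
    have s1 := l6spec n i j (a:ℕ) hi1 hij hj2 a.isLt
    have s2 := l6spec n i j (b:ℕ) hi1 hij hj2 b.isLt
    unfold L6Spec at s1 s2
    by_cases hc : (a:ℕ) = 2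
    · beta_reduce
      have e1 : (⟨l6m n i j (a:ℕ), hbd _ a.isLt⟩ : Fin (2*n+4)) = ⟨n+2+j, by omega⟩ :=
        Fin.ext (by (try simp only [Fin.val_mk]) <;> omega)
      have e2 : (⟨l6m n i j (b:ℕ), hbd _ b.isLt⟩ : Fin (2*n+4)) = ⟨n+2+i, by omega⟩ :=
        Fin.ext (by (try simp only [Fin.val_mk]) <;> omega)
      rw [e1, e2]
      exact hadj.symm
    · exact f.map_adj (dadj (by (try simp only [Fin.val_mk]) <;> omega)
        (by (try simp only [Fin.val_mk]) <;> omega))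
  · intro a b ha hb
    have s1 := l6spec n i j (a:ℕ) hi1 hij hj2 a.isLt
    have s2 := l6spec n i j (b:ℕ) hi1 hij hj2 b.isLt
    unfold L6Spec at s1 s2
    exact f.map_adj (dadj (by (try simp only [Fin.val_mk]) <;> omega)
      (by (try simp only [Fin.val_mk]) <;> omega))
  · intro a b ha hb
    have s1 := l6spec n i j (a:ℕ) hi1 hij hj2 a.isLt
    have s2 := l6spec n i j (b:ℕ) hi1 hij hj2 b.isLt
    unfold L6Spec at s1 s2
    exact f.map_adj (dadj (by (try simp only [Fin.val_mk]) <;> omega)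
      (by (try simp only [Fin.val_mk]) <;> omega))

end Constructions

/-- If a dead end is a subgraph of a `B_n`-free graph `G` (witnessed by an injective
    graph homomorphism `f`), then every vertex of the dead end other than `p_{n+1}`
    (the vertex `2n+3`) has the same degree in the dead end as in `G`. -/
theorem deadEnd_degree_eq (n : ℕ) (hn : 1 ≤ n) {V : Type*} (G : SimpleGraph V)
    (f : DeadEnd n →g G) (hf : Function.Injective f) (hG : GraphFree (Bridge n) G)
    (v : Fin (2 * n + 4)) (hv : (v : ℕ) ≠ 2 * n + 3) :
    ((DeadEnd n).neighborSet v).encard = (G.neighborSet (f v)).encard := by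
  classical
  have hvlt := v.isLt
  have himg : G.neighborSet (f v) = f '' ((DeadEnd n).neighborSet v) := by
    ext w
    simp only [Set.mem_image, mem_neighborSet]
    constructor
    · intro hw
      by_contra hnot
      push_neg at hnot
      refine hG ?_
      rcases Nat.lt_or_ge (v:ℕ) (n+2) with hc | hc
      · -- v is a clique vertex other than p₀
        obtain ⟨σ, hσinj, hσv, hσr⟩ := swapHom v (by omega)
        have hfix : ∀ z : Fin (2*n+4), n+2 ≤ (z:ℕ) → σ z = z := by
          intro z hz
          rcases hσr z with h | ⟨_, h2⟩
          · exact h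
          · omega
        have hcinj : Function.Injective ⇑(f.comp σ) := fun a b h => hσinj (hf h)
        by_cases hP1 : w = f ⟨n+3, by omega⟩
        · -- chord between v and p₁
          refine l5 hn (f.comp σ) hcinj ⟨n+1, by omega⟩ 1 (Nat.le_refl _)
            (by (try simp only [Fin.val_mk]) <;> omega) (Nat.le_refl _) hn
            (by (try simp only [Fin.val_mk]) <;> omega) ?_
          show G.Adj (f (σ ⟨n+1, by omega⟩)) (f (σ ⟨n+2+1, by omega⟩))
          rw [hσv, hfix _ (by (try simp only [Fin.val_mk]) <;> omega)]
          have : (⟨n+2+1, by omega⟩ : Fin (2*n+4)) = ⟨n+3, by omega⟩ := Fin.ext (by (try simp only [Fin.val_mk]) <;> omega)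
          rw [this, ← hP1]
          exact hw
        · have hff : ∀ u : Fin (2*n+4), (u:ℕ) ≤ n+3 → w ≠ f u := by
            intro u hu
            rcases eq_or_ne (u:ℕ) (v:ℕ) with he | hne2
            · rw [Fin.ext he]
              exact Ne.symm hw.ne
            · rcases eq_or_ne (u:ℕ) (n+3) with he3 | hne3
              · have hue : u = ⟨n+3, by omega⟩ := Fin.ext (by (try simp only [Fin.val_mk]) <;> omega)
                rw [hue]
                exact hP1
              · intro hcon
                exact hnot u (dadj (Ne.symm hne2) (Or.inl ⟨by omega, by omega⟩)) hcon.symm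
          refine c1 hn (f.comp σ) hcinj w ?_ ?_
          · show G.Adj (f (σ ⟨n+1, by omega⟩)) w
            rw [hσv]
            exact hw
          · intro u hu
            rcases hσr u with he | ⟨h1, h2⟩
            · show w ≠ f (σ u)
              rw [he]
              exact hff u hu
            · exact hff (σ u) (by omega)
      · rcases Nat.eq_or_lt_of_le hc with hc2 | hc2
        · -- v = p₀
          have hveq : v = ⟨n+2, by omega⟩ := Fin.ext (by (try simp only [Fin.val_mk]) <;> omega)
          have hff : ∀ u : Fin (2*n+4), (u:ℕ) ≤ n+3 → w ≠ f u := by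
            intro u hu
            rcases eq_or_ne (u:ℕ) (v:ℕ) with he | hne2
            · rw [Fin.ext he]
              exact Ne.symm hw.ne
            · intro hcon
              exact hnot u (dadj (Ne.symm hne2) (by omega)) hcon.symm
          refine c2 hn f hf w ?_ hff
          rw [← hveq]
          exact hw
        · -- v = p_j for some 1 ≤ j ≤ n
          set j := (v:ℕ) - (n+2) with hj
          have hj1 : 1 ≤ j := by omega
          have hjn : j ≤ n := by omega
          have hveq : v = ⟨n+2+j, by omega⟩ := Fin.ext (by (try simp only [Fin.val_mk]) <;> omega)
          by_cases hcl : ∃ u : Fin (2*n+4), (u:ℕ) ≤ n+2 ∧ w = f u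
          · obtain ⟨u, hu, hwu⟩ := hcl
            have hadj : G.Adj (f u) (f ⟨n+2+j, by omega⟩) := by
              rw [← hveq, ← hwu]
              exact hw.symm
            by_cases hq : (u:ℕ) = n+2 ∧ j = 1
            · exact absurd hwu.symm (hnot u (dadj (by omega) (by omega)))
            · rcases Nat.lt_or_ge (u:ℕ) (n+1) with hu1 | hu1
              · obtain ⟨σ, hσinj, hσv, hσr⟩ := swapHom u (by omega)
                have hfix : ∀ z : Fin (2*n+4), n+2 ≤ (z:ℕ) → σ z = z := by
                  intro z hz
                  rcases hσr z with h | ⟨_, h2⟩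
                  · exact h
                  · omega
                have hcinj : Function.Injective ⇑(f.comp σ) := fun a b h => hσinj (hf h)
                refine l5 hn (f.comp σ) hcinj ⟨n+1, by omega⟩ j (Nat.le_refl _)
                  (by (try simp only [Fin.val_mk]) <;> omega) hj1 hjn
                  (by (try simp only [Fin.val_mk]) <;> omega) ?_
                show G.Adj (f (σ ⟨n+1, by omega⟩)) (f (σ ⟨n+2+j, by omega⟩))
                rw [hσv, hfix _ (by (try simp only [Fin.val_mk]) <;> omega)]
                exact hadj
              · exact l5 hn f hf u j hu1 hu hj1 hjn hq hadj
          · push_neg at hcl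
            by_cases hmid : ∃ i : ℕ, ∃ hilt : n+2+i < 2*n+4, 1 ≤ i ∧ i+2 ≤ j ∧ w = f ⟨n+2+i, hilt⟩
            · obtain ⟨i, hilt, hi1, hij, hwi⟩ := hmid
              refine l6 hn f hf i j hi1 hij hjn ?_
              rw [← hwi, ← hveq]
              exact hw.symm
            · push_neg at hmid
              refine c4 hn f hf j hj1 hjn w ?_ ?_
              · rw [← hveq]
                exact hw
              · intro u hu
                have hult := u.isLt
                rcases Nat.lt_or_ge (u:ℕ) (n+3) with h1 | h1
                · exact hcl u (by omega)
                · rcases eq_or_ne (u:ℕ) (n+2+j) with he | hne2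
                  · have : u = v := Fin.ext (by (try simp only [Fin.val_mk]) <;> omega)
                    rw [this]
                    exact Ne.symm hw.ne
                  · rcases eq_or_ne (u:ℕ) (n+1+j) with he2 | hne3
                    · intro hcon
                      exact hnot u (dadj (by omega) (by omega)) hcon.symm
                    · rcases eq_or_ne (u:ℕ) (n+3+j) with he3 | hne4
                      · intro hcon
                        exact hnot u (dadj (by omega) (by omega)) hcon.symm
                      · have hgoal := hmid ((u:ℕ) - (n+2)) (by omega) (by omega) (by omega)
                        have hueq : u = ⟨n+2+((u:ℕ)-(n+2)), by omega⟩ := Fin.ext (by (try simp only [Fin.val_mk]) <;> omega)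
                        rw [hueq]
                        exact hgoal
    · rintro ⟨x, hx, rfl⟩
      exact f.map_adj hx
  rw [himg]
  exact (Set.InjOn.encard_image hf.injOn).symm
end

section
/- For every n ≥ 1, the drive through graph T is B_n-free. -/
open SimpleGraph

open SimpleGraph

/-- Vertex set of a drive through: the vertices of `K_{n+2}`, then for each of the `n`
    middle vertices a copy of a dead end minus its top vertex `p_{n+1}` (which is
    identified with the corresponding vertex of `K_{n+2}`), and two exits
    (`Sum.inr (Sum.inr 0) = l`, the left exit, and `Sum.inr (Sum.inr 1) = r`, the right
    exit). In the dead-end copies, `0,…,n+2` are `k₁,…,k_{n+3} = p₀` and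
    `n+3,…,2n+2` are `p₁,…,pₙ`. -/
abbrev DTV (n : ℕ) := Fin (n + 2) ⊕ (Fin n × Fin (2 * n + 3)) ⊕ Fin 2

/-- The drive through graph `T` (for parameter `n`): a complete graph `K_{n+2}` on
    `k₁,…,k_{n+2}`, with a disjoint copy of a dead end freely adjoined to each `kᵢ`
    for `1 < i < n+2` by identifying its `p_{n+1}` with `kᵢ`, a left exit `l` joined
    to `k₁` and a right exit `r` joined to `k_{n+2}`. -/
def DriveThrough (n : ℕ) : SimpleGraph (DTV n) :=
  SimpleGraph.fromRel (fun a b =>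
    match a, b with
    | .inl u, .inl v => u ≠ v
    | .inr (.inl (i, x)), .inr (.inl (i', y)) => i = i' ∧
        (((x : ℕ) < n + 3 ∧ (y : ℕ) < n + 3 ∧ x ≠ y) ∨
         (n + 2 ≤ (x : ℕ) ∧ (x : ℕ) < 2 * n + 2 ∧ (y : ℕ) = (x : ℕ) + 1))
    | .inr (.inl (i, x)), .inl j => (x : ℕ) = 2 * n + 2 ∧ (j : ℕ) = (i : ℕ) + 1
    | .inr (.inr t), .inl j => ((t : ℕ) = 0 ∧ (j : ℕ) = 0) ∨ ((t : ℕ) = 1 ∧ (j : ℕ) = n + 1)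
    | _, _ => False)

section Aux
variable {n : ℕ}

/-- every neighbor of an exit is a specific inl vertex -/
lemma nbr_of_exit {t : Fin 2} {b : DTV n}
    (h : (DriveThrough n).Adj (.inr (.inr t)) b) :
    ∃ j : Fin (n + 2), b = .inl j ∧
      ((t : ℕ) = 0 ∧ (j : ℕ) = 0 ∨ (t : ℕ) = 1 ∧ (j : ℕ) = n + 1) := by
  rw [DriveThrough, fromRel_adj] at h
  rcases b with j | ⟨⟨i, x⟩ | s⟩ <;> obtain ⟨-, h | h⟩ := h
  · exact ⟨j, rfl, h⟩
  all_goals exact h.elim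

lemma exit_nbr_unique {t : Fin 2} {b b' : DTV n}
    (h : (DriveThrough n).Adj (.inr (.inr t)) b)
    (h' : (DriveThrough n).Adj (.inr (.inr t)) b') : b = b' := by
  obtain ⟨j, rfl, hj⟩ := nbr_of_exit h
  obtain ⟨j', rfl, hj'⟩ := nbr_of_exit h'
  have : (j : ℕ) = (j' : ℕ) := by omega
  exact congrArg _ (Fin.ext this)

/-- the unique neighbor of `k_u` outside the outer clique -/
def outNbr (n : ℕ) (u : Fin (n + 2)) : DTV n :=
  if h0 : (u : ℕ) = 0 then .inr (.inr 0)
  else if h1 : (u : ℕ) = n + 1 then .inr (.inr 1)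
  else .inr (.inl (⟨(u : ℕ) - 1, by have := u.isLt; omega⟩, ⟨2 * n + 2, by omega⟩))

lemma outNbr_ne_inl (u : Fin (n + 2)) (j : Fin (n + 2)) : outNbr n u ≠ .inl j := by
  rw [outNbr]; split_ifs <;> simp

lemma nbr_of_inl {u : Fin (n + 2)} {b : DTV n}
    (h : (DriveThrough n).Adj (.inl u) b) :
    (∃ v : Fin (n + 2), b = .inl v) ∨ b = outNbr n u := by
  rw [DriveThrough, fromRel_adj] at h
  rcases b with j | ⟨⟨i, x⟩ | s⟩ <;> obtain ⟨-, h | h⟩ := h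
  · exact Or.inl ⟨j, rfl⟩
  · exact Or.inl ⟨j, rfl⟩
  · exact h.elim
  · -- h : (x:ℕ) = 2n+2 ∧ (u:ℕ) = i+1
    obtain ⟨hx, hu⟩ := h
    right
    have hi := i.isLt
    rw [outNbr, dif_neg (by omega), dif_neg (by omega)]
    simp only [Sum.inr.injEq, Sum.inl.injEq, Prod.mk.injEq]
    exact ⟨Fin.ext (by simp; omega), Fin.ext (by simp; omega)⟩
  · exact h.elim
  · -- h : (s = 0 ∧ u = 0) ∨ (s = 1 ∧ u = n+1)
    right
    rcases h with ⟨hs, hu⟩ | ⟨hs, hu⟩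
    · rw [outNbr, dif_pos hu]
      exact congrArg _ (congrArg _ (Fin.ext (by simp [hs])))
    · rw [outNbr, dif_neg (by omega), dif_pos hu]
      exact congrArg _ (congrArg _ (Fin.ext (by simp [hs])))

lemma inl_pend_adj {u : Fin (n + 2)} {i : Fin n} {x : Fin (2 * n + 3)}
    (h : (DriveThrough n).Adj (.inl u) (.inr (.inl (i, x)))) :
    (x : ℕ) = 2 * n + 2 ∧ (u : ℕ) = (i : ℕ) + 1 := by
  rw [DriveThrough, fromRel_adj] at h
  obtain ⟨-, h | h⟩ := h
  · exact h.elim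
  · exact h

/-- neighbors of a dead-end-clique vertex -/
lemma nbr_of_clique (hn : 1 ≤ n) {i : Fin n} {x : Fin (2 * n + 3)} (hx : (x : ℕ) ≤ n + 2)
    {b : DTV n} (h : (DriveThrough n).Adj (.inr (.inl (i, x))) b) :
    ∃ w : Fin (2 * n + 3), b = .inr (.inl (i, w)) ∧
      (((w : ℕ) ≤ n + 2 ∧ w ≠ x) ∨ ((x : ℕ) = n + 2 ∧ (w : ℕ) = n + 3)) := by
  rw [DriveThrough, fromRel_adj] at h
  rcases b with j | ⟨⟨i', w⟩ | s⟩ <;> obtain ⟨-, h | h⟩ := h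
  · exact absurd h.1 (by omega)
  · exact h.elim
  · obtain ⟨hi, h | h⟩ := h
    · subst hi; exact ⟨w, rfl, Or.inl ⟨by omega, fun hw => h.2.2 hw.symm⟩⟩
    · subst hi; exact ⟨w, rfl, Or.inr ⟨by omega, by omega⟩⟩
  · obtain ⟨hi, h | h⟩ := h
    · subst hi; exact ⟨w, rfl, Or.inl ⟨by omega, fun hw => h.2.2 hw⟩⟩
    · exact absurd h.2.2 (by omega)
  · exact h.elim
  · exact h.elim

/-- neighbors of a pendant-path vertex -/
lemma nbr_of_path {i : Fin n} {z : Fin (2 * n + 3)} (hz : n + 3 ≤ (z : ℕ))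
    {b : DTV n} (h : (DriveThrough n).Adj (.inr (.inl (i, z))) b) :
    (∃ w : Fin (2 * n + 3), (w : ℕ) + 1 = (z : ℕ) ∧ b = .inr (.inl (i, w))) ∨
    ((z : ℕ) < 2 * n + 2 ∧ ∃ w : Fin (2 * n + 3), (w : ℕ) = (z : ℕ) + 1 ∧ b = .inr (.inl (i, w))) ∨
    ((z : ℕ) = 2 * n + 2 ∧ ∃ j : Fin (n + 2), (j : ℕ) = (i : ℕ) + 1 ∧ b = .inl j) := by
  rw [DriveThrough, fromRel_adj] at h
  rcases b with j | ⟨⟨i', w⟩ | s⟩ <;> obtain ⟨-, h | h⟩ := h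
  · exact Or.inr (Or.inr ⟨h.1, j, h.2, rfl⟩)
  · exact h.elim
  · obtain ⟨hi, h | h⟩ := h
    · exact absurd h.1 (by omega)
    · subst hi; exact Or.inr (Or.inl ⟨h.2.1, w, h.2.2, rfl⟩)
  · obtain ⟨hi, h | h⟩ := h
    · exact absurd h.2.1 (by omega)
    · subst hi; exact Or.inl ⟨w, h.2.2.symm, rfl⟩
  · exact h.elim
  · exact h.elim

end Aux
section Aux2
variable {n : ℕ}

/-- distance-like potential for dead-end copy `i` -/
def sig (n : ℕ) (i : Fin n) : Fin (n + 2) ⊕ (Fin n × Fin (2 * n + 3)) ⊕ Fin 2 → ℕ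
  | .inr (.inl (i', x)) => if i' = i then (if (x : ℕ) ≤ n + 1 then n + 2 else 2 * n + 3 - (x : ℕ)) else 0
  | _ => 0

lemma sig_inl (i : Fin n) (u : Fin (n + 2)) : sig n i (.inl u) = 0 := rfl

lemma sig_pos_pend {i : Fin n} {v : Fin (n + 2) ⊕ (Fin n × Fin (2 * n + 3)) ⊕ Fin 2}
    (h : 0 < sig n i v) : ∃ w : Fin (2 * n + 3), v = .inr (.inl (i, w)) := by
  rcases v with u | ⟨⟨i', w⟩ | t⟩
  · simp [sig] at h
  · by_cases hi : i' = i
    · exact ⟨w, by rw [hi]⟩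
    · simp [sig, hi] at h
  · simp [sig] at h

lemma sig_pend (i : Fin n) (w : Fin (2 * n + 3)) :
    sig n i (.inr (.inl (i, w))) = if (w : ℕ) ≤ n + 1 then n + 2 else 2 * n + 3 - (w : ℕ) := by
  simp [sig]

lemma sig_clique_ge {i : Fin n} {x : Fin (2 * n + 3)} (hx : (x : ℕ) ≤ n + 2) :
    n + 1 ≤ sig n i (.inr (.inl (i, x))) := by
  rw [sig_pend]; split_ifs <;> omega
end Aux2
lemma sig_lip {n : ℕ} (i : Fin n) {a b : DTV n} (h : (DriveThrough n).Adj a b) :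
    sig n i a ≤ sig n i b + 1 := by
  rw [DriveThrough, fromRel_adj] at h
  obtain ⟨-, h⟩ := h
  rcases a with u | ⟨⟨i1, x⟩ | t⟩ <;> rcases b with v | ⟨⟨i2, y⟩ | s⟩
  · simp [sig]
  · simp [sig]
  · simp [sig]
  · -- pend, inl : rel gives x = 2n+2 (or False)
    rcases h with h | h
    · have hx := h.1
      have := x.isLt
      simp only [sig]
      split_ifs <;> omega
    · exact h.elim
  · -- pend, pend
    have hx := x.isLt; have hy := y.isLt
    rcases h with ⟨hi, h⟩ | ⟨hi, h⟩ <;> subst hi <;> simp only [sig] <;>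
      split_ifs <;> omega
  · rcases h with h | h <;> exact h.elim
  · simp [sig]
  · rcases h with h | h <;> exact h.elim
  · simp [sig]
section Aux4
variable {n : ℕ}

lemma big_vertex (_hn : 1 ≤ n) {v b1 b2 b3 : DTV n}
    (h1 : (DriveThrough n).Adj v b1) (h2 : (DriveThrough n).Adj v b2)
    (h3 : (DriveThrough n).Adj v b3)
    (d12 : b1 ≠ b2) (d13 : b1 ≠ b3) (d23 : b2 ≠ b3) :
    (∃ u : Fin (n + 2), v = .inl u) ∨
      ∃ (i : Fin n) (x : Fin (2 * n + 3)), v = .inr (.inl (i, x)) ∧ (x : ℕ) ≤ n + 2 := by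
  rcases v with u | ⟨⟨i, x⟩ | t⟩
  · exact Or.inl ⟨u, rfl⟩
  · by_cases hx : (x : ℕ) ≤ n + 2
    · exact Or.inr ⟨i, x, rfl, hx⟩
    · exfalso
      have hx3 : n + 3 ≤ (x : ℕ) := by omega
      rcases nbr_of_path hx3 h1 with ⟨w1, hw1, e1⟩ | ⟨hz1, w1, hw1, e1⟩ | ⟨hz1, j1, hj1, e1⟩ <;>
      rcases nbr_of_path hx3 h2 with ⟨w2, hw2, e2⟩ | ⟨hz2, w2, hw2, e2⟩ | ⟨hz2, j2, hj2, e2⟩ <;>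
      rcases nbr_of_path hx3 h3 with ⟨w3, hw3, e3⟩ | ⟨hz3, w3, hw3, e3⟩ | ⟨hz3, j3, hj3, e3⟩ <;>
      subst e1 <;> subst e2 <;> subst e3 <;>
      first
        | omega
        | exact d12 (by rw [show w1 = w2 from Fin.ext (by omega)])
        | exact d13 (by rw [show w1 = w3 from Fin.ext (by omega)])
        | exact d23 (by rw [show w2 = w3 from Fin.ext (by omega)])
        | exact d12 (by rw [show j1 = j2 from Fin.ext (by omega)])
        | exact d13 (by rw [show j1 = j3 from Fin.ext (by omega)])
        | exact d23 (by rw [show j2 = j3 from Fin.ext (by omega)])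
  · exact absurd (exit_nbr_unique h1 h2) d12

lemma forced_down (y : ℕ → DTV n)
    (hsp : ∀ m, m < n → (DriveThrough n).Adj (y m) (y (m + 1)))
    (hinj : ∀ m, m ≤ n → ∀ m', m' ≤ n → y m = y m' → m = m')
    {m0 : ℕ} (hm01 : 1 ≤ m0) (hm0n : m0 ≤ n) {i : Fin n}
    {z : Fin (2 * n + 3)} (hzval : (z : ℕ) = 2 * n + 2) (hym0 : y m0 = .inr (.inl (i, z)))
    {v : Fin (n + 2)} (hvval : (v : ℕ) = (i : ℕ) + 1) (hprev : y (m0 - 1) = .inl v) :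
    ∀ k, k ≤ n - m0 →
      ∃ w : Fin (2 * n + 3), (w : ℕ) = 2 * n + 2 - k ∧ y (m0 + k) = .inr (.inl (i, w)) := by
  intro k
  induction k using Nat.strong_induction_on with
  | _ k ih =>
    rcases k with _ | k
    · exact fun _ => ⟨z, by omega, hym0⟩
    rcases k with _ | k
    · intro hk1
      have hadj := hsp m0 (by omega)
      rw [hym0] at hadj
      rcases nbr_of_path (by omega) hadj with ⟨w, hw, e⟩ | ⟨hlt, w, hw, e⟩ | ⟨-, j, hj, e⟩
      · exact ⟨w, by omega, e⟩
      · omega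
      · exfalso
        have hjv : j = v := Fin.ext (by omega)
        subst hjv
        rw [← hprev] at e
        have := hinj (m0 + 1) (by omega) (m0 - 1) (by omega) e
        omega
    · intro hk
      obtain ⟨w1, hw1, e1⟩ := ih (k + 1) (by omega) (by omega)
      obtain ⟨w0, hw0, e0⟩ := ih k (by omega) (by omega)
      have hadj := hsp (m0 + k + 1) (by omega)
      have e1' : y (m0 + k + 1) = Sum.inr (Sum.inl (i, w1)) := e1
      rw [e1'] at hadj
      have hw1ge : n + 3 ≤ (w1 : ℕ) := by omega
      rcases nbr_of_path hw1ge hadj with ⟨w, hw, e⟩ | ⟨hlt, w, hw, e⟩ | ⟨hz2, j, hj, e⟩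
      · exact ⟨w, by omega, e⟩
      · exfalso
        have hww : w = w0 := Fin.ext (by omega)
        subst hww
        rw [← e0] at e
        have := hinj (m0 + k + 1 + 1) (by omega) (m0 + k) (by omega) e
        omega
      · omega

lemma forced_up (y : ℕ → DTV n)
    (hsp : ∀ m, m < n → (DriveThrough n).Adj (y m) (y (m + 1)))
    (hinj : ∀ m, m ≤ n → ∀ m', m' ≤ n → y m = y m' → m = m')
    {m0 : ℕ} (hm01 : 1 ≤ m0) (hm0n : m0 ≤ n) {i : Fin n}
    {z : Fin (2 * n + 3)} (hzval : (z : ℕ) = n + 3) (hym0 : y m0 = .inr (.inl (i, z)))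
    {w1 : Fin (2 * n + 3)} (hw1val : (w1 : ℕ) = n + 2) (hprev : y (m0 - 1) = .inr (.inl (i, w1))) :
    ∀ k, k ≤ n - m0 →
      ∃ w : Fin (2 * n + 3), (w : ℕ) = n + 3 + k ∧ y (m0 + k) = .inr (.inl (i, w)) := by
  intro k
  induction k using Nat.strong_induction_on with
  | _ k ih =>
    rcases k with _ | k
    · exact fun _ => ⟨z, by omega, hym0⟩
    rcases k with _ | k
    · intro hk1
      have hadj := hsp m0 (by omega)
      rw [hym0] at hadj
      rcases nbr_of_path (by omega) hadj with ⟨w, hw, e⟩ | ⟨hlt, w, hw, e⟩ | ⟨hz2, j, hj, e⟩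
      · exfalso
        have hww : w = w1 := Fin.ext (by omega)
        subst hww
        rw [← hprev] at e
        have := hinj (m0 + 1) (by omega) (m0 - 1) (by omega) e
        omega
      · exact ⟨w, by omega, e⟩
      · omega
    · intro hk
      obtain ⟨wp, hwp, e1⟩ := ih (k + 1) (by omega) (by omega)
      obtain ⟨w0, hw0, e0⟩ := ih k (by omega) (by omega)
      have hadj := hsp (m0 + k + 1) (by omega)
      have e1' : y (m0 + k + 1) = Sum.inr (Sum.inl (i, wp)) := e1
      rw [e1'] at hadj
      have hwpge : n + 3 ≤ (wp : ℕ) := by omega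
      rcases nbr_of_path hwpge hadj with ⟨w, hw, e⟩ | ⟨hlt, w, hw, e⟩ | ⟨hz2, j, hj, e⟩
      · exfalso
        have hww : w = w0 := Fin.ext (by omega)
        subst hww
        rw [← e0] at e
        have := hinj (m0 + k + 1 + 1) (by omega) (m0 + k) (by omega) e
        omega
      · exact ⟨w, by omega, e⟩
      · omega

end Aux4

/-- For every `n ≥ 1`, the drive through graph is `B_n`-free. -/
theorem driveThrough_bridgeFree (n : ℕ) (hn : 1 ≤ n) :
    GraphFree (Bridge n) (DriveThrough n) := by
  classical
  rintro ⟨f, hf⟩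
  set y : ℕ → DTV n := fun m => f ⟨2 + min m n, by omega⟩ with hydef
  have hyv : ∀ m (hm : m ≤ n), y m = f ⟨2 + m, by omega⟩ := by
    intro m hm
    rw [hydef]
    exact congrArg f (Fin.ext (by show 2 + min m n = 2 + m; omega))
  have hfne : ∀ (p q : Fin (n + 5)), (p : ℕ) ≠ (q : ℕ) → f p ≠ f q :=
    fun p q hpq h => hpq (congrArg Fin.val (hf h))
  have hsp : ∀ m, m < n → (DriveThrough n).Adj (y m) (y (m + 1)) := by
    intro m hm
    rw [hyv m (by omega), hyv (m + 1) (by omega)]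
    apply f.map_adj
    rw [Bridge, fromRel_adj]
    refine ⟨by simp only [ne_eq, Fin.mk.injEq]; omega,
      Or.inl (Or.inr (Or.inr (Or.inl ⟨?_, ?_, ?_⟩)))⟩
    · show 2 ≤ 2 + m; omega
    · show 2 + m < n + 2; omega
    · show (2 + (m + 1) : ℕ) = 2 + m + 1; omega
  have hyinj : ∀ m, m ≤ n → ∀ m', m' ≤ n → y m = y m' → m = m' := by
    intro m hm m' hm' e
    rw [hyv m hm, hyv m' hm'] at e
    have := hf e
    simp only [Fin.mk.injEq] at this
    omega
  have hadjA : (DriveThrough n).Adj (y 0) (f ⟨0, by omega⟩) := by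
    rw [hyv 0 (by omega)]
    apply (f.map_adj _).symm
    rw [Bridge, fromRel_adj]
    exact ⟨by simp only [ne_eq, Fin.mk.injEq]; omega, Or.inl (Or.inl ⟨rfl, rfl⟩)⟩
  have hadjB : (DriveThrough n).Adj (y 0) (f ⟨1, by omega⟩) := by
    rw [hyv 0 (by omega)]
    apply (f.map_adj _).symm
    rw [Bridge, fromRel_adj]
    exact ⟨by simp only [ne_eq, Fin.mk.injEq]; omega, Or.inl (Or.inr (Or.inl ⟨rfl, rfl⟩))⟩
  have hadjD : (DriveThrough n).Adj (y n) (f ⟨n + 3, by omega⟩) := by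
    rw [hyv n (by omega)]
    apply f.map_adj
    rw [Bridge, fromRel_adj]
    refine ⟨by simp only [ne_eq, Fin.mk.injEq]; omega,
      Or.inl (Or.inr (Or.inr (Or.inr (Or.inl ⟨?_, ?_⟩))))⟩
    · show 2 + n = n + 2; omega
    · show (n + 3 : ℕ) = n + 3; rfl
  have hadjE : (DriveThrough n).Adj (y n) (f ⟨n + 4, by omega⟩) := by
    rw [hyv n (by omega)]
    apply f.map_adj
    rw [Bridge, fromRel_adj]
    refine ⟨by simp only [ne_eq, Fin.mk.injEq]; omega,
      Or.inl (Or.inr (Or.inr (Or.inr (Or.inr ⟨?_, ?_⟩))))⟩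
    · show 2 + n = n + 2; omega
    · show (n + 4 : ℕ) = n + 4; rfl
  have hadjN1 : (DriveThrough n).Adj (y n) (y (n - 1)) := by
    have := hsp (n - 1) (by omega)
    rw [Nat.sub_add_cancel hn] at this
    exact this.symm
  -- classification of the two spine endpoints
  have hy1 : y 1 = f ⟨3, by omega⟩ :=
    (hyv 1 hn).trans (congrArg f (Fin.ext (by show (2 + 1 : ℕ) = 3; omega)))
  have hyn1 : y (n - 1) = f ⟨n + 1, by omega⟩ :=
    (hyv (n - 1) (by omega)).trans (congrArg f (Fin.ext (by show 2 + (n - 1) = n + 1; omega)))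
  have hclass0 := big_vertex hn hadjA hadjB (hsp 0 hn)
    (hfne _ _ (by show (0 : ℕ) ≠ 1; omega))
    (by rw [hy1]; exact hfne _ _ (by show (0 : ℕ) ≠ 3; omega))
    (by rw [hy1]; exact hfne _ _ (by show (1 : ℕ) ≠ 3; omega))
  have hclassn := big_vertex hn hadjD hadjE hadjN1
    (hfne _ _ (by show (n + 3 : ℕ) ≠ n + 4; omega))
    (by rw [hyn1]; exact hfne _ _ (by show (n + 3 : ℕ) ≠ n + 1; omega))
    (by rw [hyn1]; exact hfne _ _ (by show (n + 4 : ℕ) ≠ n + 1; omega))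
  -- Lipschitz chains
  have chain1 : ∀ (i : Fin n) (m : ℕ), m ≤ n → sig n i (y 0) ≤ sig n i (y m) + m := by
    intro i m
    induction m with
    | zero => intro _; omega
    | succ m ihm =>
      intro hm
      have h1 := ihm (by omega)
      have h2 := sig_lip i (hsp m (by omega))
      omega
  have chain2 : ∀ (i : Fin n) (m : ℕ), m ≤ n → sig n i (y n) ≤ sig n i (y m) + (n - m) := by
    have chain2' : ∀ (i : Fin n) (k : ℕ), k ≤ n → sig n i (y n) ≤ sig n i (y (n - k)) + k := by
      intro i k
      induction k with
      | zero => intro _; rw [Nat.sub_zero]; omega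
      | succ k ihk =>
        intro hk
        have h1 := ihk (by omega)
        have h2 := sig_lip i (hsp (n - (k + 1)) (by omega)).symm
        rw [show n - (k + 1) + 1 = n - k from by omega] at h2
        omega
    intro i m hm
    have := chain2' i (n - m) (by omega)
    rw [show n - (n - m) = m from by omega] at this
    exact this
  rcases hclass0 with ⟨u0, hu0⟩ | ⟨i, x0, h0eq, hx0⟩ <;>
    rcases hclassn with ⟨un, hun⟩ | ⟨i', xn, hneq, hxn⟩
  · -- Case A : both endpoints in the outer clique
    have hallinl : ∀ m, m ≤ n → ∃ v : Fin (n + 2), y m = .inl v := by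
      by_contra hcon
      push_neg at hcon
      obtain ⟨m1, hm1n, hm1⟩ := hcon
      have hP : ∃ m, m ≤ n ∧ ∀ v : Fin (n + 2), y m ≠ .inl v := ⟨m1, hm1n, hm1⟩
      obtain ⟨hm0n, hm0not⟩ := Nat.find_spec hP
      set m0 := Nat.find hP with hm0def
      have hm0pos : 1 ≤ m0 := by
        by_contra hh
        have h00 : m0 = 0 := by omega
        rw [h00] at hm0not
        exact hm0not u0 hu0
      have hm0ltn : m0 < n := by
        rcases Nat.lt_or_ge m0 n with h | h
        · exact h
        · exfalso
          have he : m0 = n := by omega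
          rw [he] at hm0not
          exact hm0not un hun
      have hprev : ∃ v : Fin (n + 2), y (m0 - 1) = .inl v := by
        have hmin := Nat.find_min hP (show m0 - 1 < m0 from by omega)
        push_neg at hmin
        exact hmin (by omega)
      obtain ⟨v, hv⟩ := hprev
      rcases hshape : y m0 with u | ⟨⟨i, z⟩ | t⟩
      · exact hm0not u hshape
      · have hadj := hsp (m0 - 1) (by omega)
        rw [show m0 - 1 + 1 = m0 from by omega, hv, hshape] at hadj
        obtain ⟨hz2, hvv⟩ := inl_pend_adj hadj
        obtain ⟨w, hwval, hyn⟩ :=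
          forced_down y hsp hyinj hm0pos (by omega) hz2 hshape hvv hv (n - m0) (le_refl _)
        rw [show m0 + (n - m0) = n from by omega, hun] at hyn
        simp at hyn
      · have ha := hsp (m0 - 1) (by omega)
        rw [show m0 - 1 + 1 = m0 from by omega] at ha
        have hb := hsp m0 (by omega)
        rw [hshape] at ha hb
        have he := exit_nbr_unique ha.symm hb
        have := hyinj (m0 - 1) (by omega) (m0 + 1) (by omega) he
        omega
    -- counting
    have hall : ∀ p : Fin (n + 5),
        (∃ j : Fin (n + 2), f p = .inl j) ∨ f p = outNbr n u0 ∨ f p = outNbr n un := by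
      intro p
      obtain ⟨pv, hpv⟩ := p
      by_cases h0 : pv = 0
      · subst h0
        have hA := hadjA; rw [hu0] at hA
        rcases nbr_of_inl hA with ⟨j, hj⟩ | hO
        · exact Or.inl ⟨j, hj⟩
        · exact Or.inr (Or.inl hO)
      by_cases h1 : pv = 1
      · subst h1
        have hB := hadjB; rw [hu0] at hB
        rcases nbr_of_inl hB with ⟨j, hj⟩ | hO
        · exact Or.inl ⟨j, hj⟩
        · exact Or.inr (Or.inl hO)
      by_cases h3 : pv = n + 3
      · subst h3
        have hD := hadjD; rw [hun] at hD
        rcases nbr_of_inl hD with ⟨j, hj⟩ | hO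
        · exact Or.inl ⟨j, hj⟩
        · exact Or.inr (Or.inr hO)
      by_cases h4 : pv = n + 4
      · subst h4
        have hE := hadjE; rw [hun] at hE
        rcases nbr_of_inl hE with ⟨j, hj⟩ | hO
        · exact Or.inl ⟨j, hj⟩
        · exact Or.inr (Or.inr hO)
      · have hm : pv - 2 ≤ n := by omega
        obtain ⟨vv, hvv⟩ := hallinl (pv - 2) hm
        left
        refine ⟨vv, ?_⟩
        rw [hyv _ hm] at hvv
        have he : (⟨pv, hpv⟩ : Fin (n + 5)) = ⟨2 + (pv - 2), by omega⟩ :=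
          Fin.ext (by show pv = 2 + (pv - 2); omega)
        rw [he]
        exact hvv
    have hginj : ∃ g : Fin (n + 5) → (Fin (n + 2) ⊕ Fin 2), Function.Injective g := by
      refine ⟨fun p => if hj : ∃ j : Fin (n + 2), f p = .inl j then Sum.inl hj.choose
        else if f p = outNbr n u0 then Sum.inr 0 else Sum.inr 1, ?_⟩
      intro p q hpq
      apply hf
      by_cases hjp : ∃ j : Fin (n + 2), f p = .inl j <;>
        by_cases hjq : ∃ j : Fin (n + 2), f q = .inl j
      · simp only [dif_pos hjp, dif_pos hjq] at hpq
        rw [hjp.choose_spec, hjq.choose_spec]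
        exact congrArg _ (Sum.inl.inj hpq)
      · simp only [dif_pos hjp, dif_neg hjq] at hpq
        split_ifs at hpq
      · simp only [dif_neg hjp, dif_pos hjq] at hpq
        split_ifs at hpq
      · simp only [dif_neg hjp, dif_neg hjq] at hpq
        by_cases hp0 : f p = outNbr n u0 <;> by_cases hq0 : f q = outNbr n u0
        · rw [hp0, hq0]
        · simp only [if_pos hp0, if_neg hq0] at hpq
          exact absurd hpq (by simp)
        · simp only [if_neg hp0, if_pos hq0] at hpq
          exact absurd hpq (by simp)
        · have e1 : f p = outNbr n un := by
            rcases hall p with h | h | h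
            exacts [absurd h hjp, absurd h hp0, h]
          have e2 : f q = outNbr n un := by
            rcases hall q with h | h | h
            exacts [absurd h hjq, absurd h hq0, h]
          rw [e1, e2]
    obtain ⟨g, hg⟩ := hginj
    have hcard := Fintype.card_le_of_injective g hg
    simp only [Fintype.card_fin, Fintype.card_sum] at hcard
    omega
  · -- mixed : y 0 outer, y n dead-end clique
    have h1 := chain2 i' 0 (by omega)
    have h2 : n + 1 ≤ sig n i' (y n) := by rw [hneq]; exact sig_clique_ge hxn
    rw [hu0, sig_inl] at h1
    omega
  · -- mixed : y 0 dead-end clique, y n outer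
    have h1 := chain1 i n (le_refl n)
    have h2 : n + 1 ≤ sig n i (y 0) := by rw [h0eq]; exact sig_clique_ge hx0
    rw [hun, sig_inl] at h1
    omega
  · -- Case B : both endpoints in a dead-end clique
    have hs0 : n + 1 ≤ sig n i (y 0) := by rw [h0eq]; exact sig_clique_ge hx0
    have hsn_pos : 0 < sig n i (y n) := by
      have := chain1 i n (le_refl n); omega
    obtain ⟨w, hw⟩ := sig_pos_pend hsn_pos
    rw [hneq] at hw
    simp only [Sum.inr.injEq, Sum.inl.injEq, Prod.mk.injEq] at hw
    obtain ⟨hii, hwxn⟩ := hw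
    rw [hii] at hneq
    have hposall : ∀ m, m ≤ n → ∃ w : Fin (2 * n + 3), y m = .inr (.inl (i, w)) := by
      intro m hm
      have h2 := chain2 i m hm
      have h3 : n + 1 ≤ sig n i (y n) := by rw [hneq]; exact sig_clique_ge hxn
      exact sig_pos_pend (by omega)
    have hlow : ∀ m, m ≤ n → ∀ w : Fin (2 * n + 3),
        y m = .inr (.inl (i, w)) → (w : ℕ) ≤ n + 2 := by
      by_contra hcon
      push_neg at hcon
      obtain ⟨m1, hm1n, w1', hw1', hge⟩ := hcon
      have hQ : ∃ m, m ≤ n ∧ ∃ w : Fin (2 * n + 3),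
          y m = .inr (.inl (i, w)) ∧ n + 3 ≤ (w : ℕ) := ⟨m1, hm1n, w1', hw1', by omega⟩
      obtain ⟨hm0n, z, hz, hz3⟩ := Nat.find_spec hQ
      set m0 := Nat.find hQ with hm0def
      have hm0pos : 1 ≤ m0 := by
        by_contra hh
        have h00 : m0 = 0 := by omega
        rw [h00, h0eq] at hz
        simp only [Sum.inr.injEq, Sum.inl.injEq, Prod.mk.injEq, true_and] at hz
        rw [hz] at hx0
        omega
      obtain ⟨wp, hwp⟩ := hposall (m0 - 1) (by omega)
      have hwple : (wp : ℕ) ≤ n + 2 := by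
        have hmin := Nat.find_min hQ (show m0 - 1 < m0 from by omega)
        push_neg at hmin
        have := hmin (by omega) wp hwp
        omega
      have hadj := hsp (m0 - 1) (by omega)
      rw [show m0 - 1 + 1 = m0 from by omega, hwp, hz] at hadj
      obtain ⟨w', hw'eq, hdisj⟩ := nbr_of_clique hn hwple hadj
      simp only [Sum.inr.injEq, Sum.inl.injEq, Prod.mk.injEq, true_and] at hw'eq
      rcases hdisj with ⟨hle, hne⟩ | ⟨hwp2, hw3⟩
      · rw [← hw'eq] at hle; omega
      · rw [← hw'eq] at hw3
        obtain ⟨wfin, hwfin, hynfin⟩ :=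
          forced_up y hsp hyinj hm0pos hm0n hw3 hz hwp2 hwp (n - m0) (le_refl _)
        rw [show m0 + (n - m0) = n from by omega, hneq] at hynfin
        simp only [Sum.inr.injEq, Sum.inl.injEq, Prod.mk.injEq, true_and] at hynfin
        rw [hynfin] at hxn
        omega
    have hallB : ∀ p : Fin (n + 5),
        ∃ w : Fin (2 * n + 3), f p = .inr (.inl (i, w)) ∧ (w : ℕ) ≤ n + 3 := by
      intro p
      obtain ⟨pv, hpv⟩ := p
      by_cases h0 : pv = 0
      · subst h0
        have hA := hadjA; rw [h0eq] at hA
        obtain ⟨w, hw, hd⟩ := nbr_of_clique hn hx0 hA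
        exact ⟨w, hw, by rcases hd with ⟨h, -⟩ | ⟨-, h⟩ <;> omega⟩
      by_cases h1 : pv = 1
      · subst h1
        have hB := hadjB; rw [h0eq] at hB
        obtain ⟨w, hw, hd⟩ := nbr_of_clique hn hx0 hB
        exact ⟨w, hw, by rcases hd with ⟨h, -⟩ | ⟨-, h⟩ <;> omega⟩
      by_cases h3 : pv = n + 3
      · subst h3
        have hD := hadjD; rw [hneq] at hD
        obtain ⟨w, hw, hd⟩ := nbr_of_clique hn hxn hD
        exact ⟨w, hw, by rcases hd with ⟨h, -⟩ | ⟨-, h⟩ <;> omega⟩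
      by_cases h4 : pv = n + 4
      · subst h4
        have hE := hadjE; rw [hneq] at hE
        obtain ⟨w, hw, hd⟩ := nbr_of_clique hn hxn hE
        exact ⟨w, hw, by rcases hd with ⟨h, -⟩ | ⟨-, h⟩ <;> omega⟩
      · have hm : pv - 2 ≤ n := by omega
        obtain ⟨w, hw⟩ := hposall (pv - 2) hm
        have hwle := hlow (pv - 2) hm w hw
        refine ⟨w, ?_, by omega⟩
        rw [hyv _ hm] at hw
        have he : (⟨pv, hpv⟩ : Fin (n + 5)) = ⟨2 + (pv - 2), by omega⟩ :=
          Fin.ext (by show pv = 2 + (pv - 2); omega)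
        rw [he]
        exact hw
    have hg : Function.Injective
        (fun p : Fin (n + 5) => (⟨((hallB p).choose).val,
          by have := (hallB p).choose_spec.2; omega⟩ : Fin (n + 4))) := by
      intro p q hpq
      apply hf
      have hp := (hallB p).choose_spec.1
      have hq := (hallB q).choose_spec.1
      rw [hp, hq]
      simp only [Fin.mk.injEq] at hpq
      rw [show (hallB p).choose = (hallB q).choose from Fin.ext hpq]
    have hcard := Fintype.card_le_of_injective _ hg
    simp only [Fintype.card_fin] at hcard
    omega
end

section
/- For k ≥ 2, if f_1 and f_2 are two embeddings of the graph U into a graph G that omits all cycles of length at most 2k, and f_1(x^0_i) = f_2(x^0_i) for all i ∈ ℤ_5, then f_1 = f_2. -/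
/-!
Two paths of length at most `k` with the same ends in a graph without cycles of length at most
`2k` coincide: otherwise their union would contain such a cycle. Each side of the pentagon `S(m)`
is a path of length `k` between two corners `xᵐᵢ`, `xᵐᵢ₊₁`, so if the two embeddings agree on the
corners of `S(m)` they agree on all of `S(m)`, in particular on the corners of `S(m+1)`, which
are inner vertices of `S(m)`. Induction on `m` covers all of `U`.
-/

open SimpleGraph

/-- `G` omits all cycles of length at most `2k`:
    every cycle in `G` has length greater than `2k`. -/
def NoShortCycles (k : ℕ) {V : Type*} (G : SimpleGraph V) : Prop :=
  ∀ (v : V) (c : G.Walk v v), c.IsCycle → 2 * k < c.length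

/-- Vertex set of the graph `U`: `Sum.inl i` is `x⁰ᵢ` (`i ∈ ℤ₅`), and
    `Sum.inr (m, i, j)` is the inner vertex `yᵐ_{i,j+1}` of the path of `S(m)` from
    `xᵐᵢ` to `xᵐᵢ₊₁`.  The vertices `xᵐᵢ` for `m ≥ 1` are identified with inner
    vertices of level `m - 1` (see `IsXVert`), so they need no vertices of their own. -/
abbrev UV (k : ℕ) := Fin 5 ⊕ (ℕ × Fin 5 × Fin (k - 1))

/-- `u` is the vertex `xᵐᵢ` of `U`: for `m = 0` it is `Sum.inl i`, and for
    `m = m' + 1` it is the inner vertex `y^{m'}_{2i, ⌊(k+1)/2⌋}` of `S(m')`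
    (with `0`-based inner index `⌊(k+1)/2⌋ - 1`). -/
def IsXVert (k : ℕ) (m : ℕ) (i : Fin 5) (u : UV k) : Prop :=
  (m = 0 ∧ u = Sum.inl i) ∨
  (∃ (m' : ℕ) (j : Fin (k - 1)), m = m' + 1 ∧ (j : ℕ) + 1 = (k + 1) / 2 ∧
    u = Sum.inr (m', 2 * i, j))

/-- The graph `U = ⋃ₘ U(m)`: pairwise disjoint copies `S(m)` of `S_k`, where `S(m+1)`
    is freely adjoined to `S(m)` by identifying `x^{m+1}ᵢ` with `yᵐ_{2i,⌊(k+1)/2⌋}`.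
    Each `S(m)` consists, for `i ∈ ℤ₅`, of a simple path
    `xᵐᵢ, yᵐ_{i,1}, …, yᵐ_{i,k-1}, xᵐᵢ₊₁` of length `k`. -/
def GraphU (k : ℕ) : SimpleGraph (UV k) :=
  SimpleGraph.fromRel (fun a b =>
    ∃ (m : ℕ) (i : Fin 5),
      (IsXVert k m i a ∧ ∃ j : Fin (k - 1), (j : ℕ) = 0 ∧ b = Sum.inr (m, i, j)) ∨
      (∃ j j' : Fin (k - 1), (j' : ℕ) = (j : ℕ) + 1 ∧
        a = Sum.inr (m, i, j) ∧ b = Sum.inr (m, i, j')) ∨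
      (∃ j : Fin (k - 1), (j : ℕ) = k - 2 ∧ a = Sum.inr (m, i, j) ∧ IsXVert k m (i + 1) b))

theorem NoShortCycles.path_eq {k : ℕ} {V : Type*} {G : SimpleGraph V} (hG : NoShortCycles k G)
    {u v : V} {p q : G.Walk u v} (hp : p.IsPath) (hq : q.IsPath)
    (hpk : p.length ≤ k) (hqk : q.length ≤ k) : p = q := by
  by_contra hne
  obtain ⟨_, -, -, c, hc, hlen⟩ := hp.exists_isCycle_length_le_add_of_ne hq hne
  have := hG _ c hc
  omega

theorem NoShortCycles.apply_eq_of_mem_support {k : ℕ} {V W : Type*} {G : SimpleGraph V}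
    {H : SimpleGraph W} (hG : NoShortCycles k G) {f₁ f₂ : H →g G}
    (h₁ : Function.Injective f₁) (h₂ : Function.Injective f₂) {a b : W} {p : H.Walk a b}
    (hp : p.IsPath) (hpk : p.length ≤ k) (ha : f₁ a = f₂ a) (hb : f₁ b = f₂ b) :
    ∀ x ∈ p.support, f₁ x = f₂ x := by
  have hpq : p.map f₁ = (p.map f₂).copy ha.symm hb.symm :=
    hG.path_eq (hp.map h₁) (by simpa using hp.map h₂) (by simpa) (by simpa)
  have := congrArg Walk.support hpq
  simp only [Walk.support_copy, Walk.support_map] at this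
  exact List.map_inj_left.mp this

theorem SimpleGraph.exists_isPath_of_adj_succ {V : Type*} {G : SimpleGraph V} {c : ℕ → V}
    {n : ℕ} (hadj : ∀ t < n, G.Adj (c t) (c (t + 1))) (hinj : Set.InjOn c (Set.Iic n)) :
    ∃ p : G.Walk (c 0) (c n), p.IsPath ∧ p.length = n ∧ ∀ t ≤ n, c t ∈ p.support := by
  set l := (List.range (n + 1)).map c
  have hne : l ≠ [] := by simp [l]
  have hchain : l.IsChain G.Adj :=
    (List.isChain_map c).mpr ((List.isChain_range_succ _ n).mpr hadj)
  have hhead : l.head hne = c 0 := by simp [l, List.head_map]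
  have hlast : l.getLast hne = c n := by simp [l, List.getLast_map]
  refine ⟨(Walk.ofSupport l hne hchain).copy hhead hlast, ?_, by simp [l], ?_⟩
  · rw [Walk.isPath_copy, Walk.isPath_def, Walk.support_ofSupport]
    exact List.Nodup.map_on (fun s hs t ht h => hinj (by simpa [Nat.lt_succ_iff] using hs)
      (by simpa [Nat.lt_succ_iff] using ht) h) List.nodup_range
  · intro t ht
    simpa [l] using ⟨t, by omega, rfl⟩

section

variable {k m : ℕ} {i : Fin 5} {u v : UV k}

theorem exists_isXVert (hk : 2 ≤ k) (m : ℕ) (i : Fin 5) : ∃ u, IsXVert k m i u := by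
  cases m with
  | zero => exact ⟨_, .inl ⟨rfl, rfl⟩⟩
  | succ m => exact ⟨_, .inr ⟨m, ⟨(k + 1) / 2 - 1, by omega⟩, rfl, by dsimp only; omega, rfl⟩⟩

theorem IsXVert.ne_inr (hu : IsXVert k m i u) (i' : Fin 5) (j : Fin (k - 1)) :
    u ≠ .inr (m, i', j) := by
  rcases hu with ⟨-, rfl⟩ | ⟨m', -, rfl, -, rfl⟩ <;> simp

theorem IsXVert.ne_of_succ (hu : IsXVert k m i u) (hv : IsXVert k m (i + 1) v) : u ≠ v := by
  rcases hu with ⟨hm, rfl⟩ | ⟨m', j, rfl, -, rfl⟩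
  · rcases hv with ⟨-, rfl⟩ | ⟨_, _, h, -⟩
    · simp only [ne_eq, Sum.inl.injEq]
      revert i; decide
    · omega
  · rcases hv with ⟨h, -⟩ | ⟨_, _, h, -, rfl⟩
    · omega
    · have : 2 * i ≠ 2 * (i + 1) := by revert i; decide
      simp [this]

namespace GraphU

theorem adj_inr_inr {j j' : Fin (k - 1)} (h : (j' : ℕ) = j + 1) :
    (GraphU k).Adj (.inr (m, i, j)) (.inr (m, i, j')) := by
  refine (fromRel_adj _ _ _).mpr ⟨fun h' => ?_, .inl ⟨m, i, .inr (.inl ⟨j, j', h, rfl, rfl⟩)⟩⟩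
  simp only [Sum.inr.injEq, Prod.mk.injEq, true_and] at h'
  omega

theorem adj_of_isXVert (hu : IsXVert k m i u) {j : Fin (k - 1)} (hj : (j : ℕ) = 0) :
    (GraphU k).Adj u (.inr (m, i, j)) :=
  (fromRel_adj _ _ _).mpr ⟨hu.ne_inr i j, .inl ⟨m, i, .inl ⟨hu, j, hj, rfl⟩⟩⟩

theorem adj_of_isXVert_succ (hv : IsXVert k m (i + 1) v) {j : Fin (k - 1)}
    (hj : (j : ℕ) = k - 2) : (GraphU k).Adj (.inr (m, i, j)) v :=
  (fromRel_adj _ _ _).mpr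
    ⟨(hv.ne_inr i j).symm, .inl ⟨m, i, .inr (.inr ⟨j, hj, rfl, hv⟩)⟩⟩

def sideVert (u v : UV k) (m : ℕ) (i : Fin 5) (t : ℕ) : UV k :=
  if h₀ : t = 0 then u else if h : t < k then .inr (m, i, ⟨t - 1, by omega⟩) else v

theorem sideVert_injOn (hu : IsXVert k m i u) (hv : IsXVert k m (i + 1) v) :
    Set.InjOn (sideVert u v m i) (Set.Iic k) := by
  intro s hs t ht hst
  simp only [Set.mem_Iic] at hs ht
  have := hu.ne_of_succ hv
  have := hu.ne_inr
  have := hv.ne_inr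
  have := fun i' j => (hu.ne_inr i' j).symm
  have := fun i' j => (hv.ne_inr i' j).symm
  unfold sideVert at hst
  split_ifs at hst <;> simp_all <;> omega

theorem sideVert_adj (hk : 2 ≤ k) (hu : IsXVert k m i u) (hv : IsXVert k m (i + 1) v) {t : ℕ}
    (ht : t < k) : (GraphU k).Adj (sideVert u v m i t) (sideVert u v m i (t + 1)) := by
  obtain rfl | ht₀ := Nat.eq_zero_or_pos t
  · simpa [sideVert, show 1 < k by omega] using adj_of_isXVert hu (j := ⟨0, by omega⟩) rfl
  obtain hlast | hmid := (Nat.succ_le_of_lt ht).eq_or_lt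
  · simpa [sideVert, ht₀.ne', ht, show ¬t + 1 < k by omega] using
      adj_of_isXVert_succ hv (j := ⟨t - 1, by omega⟩) (by dsimp only; omega)
  · simpa [sideVert, ht₀.ne', ht, hmid] using
      adj_inr_inr (m := m) (i := i) (j := ⟨t - 1, by omega⟩) (j' := ⟨t, by omega⟩)
        (by dsimp only; omega)

theorem exists_isPath_side (hk : 2 ≤ k) (hu : IsXVert k m i u) (hv : IsXVert k m (i + 1) v) :
    ∃ p : (GraphU k).Walk u v, p.IsPath ∧ p.length = k ∧ ∀ j, .inr (m, i, j) ∈ p.support := by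
  obtain ⟨p, hp, hpk, hmem⟩ :=
    exists_isPath_of_adj_succ (c := sideVert u v m i) (fun _ ht => sideVert_adj hk hu hv ht)
      (sideVert_injOn hu hv)
  have h₀ : sideVert u v m i 0 = u := rfl
  have hlast : sideVert u v m i k = v := by
    rw [sideVert, dif_neg (by omega), dif_neg (lt_irrefl k)]
  refine ⟨p.copy h₀ hlast, by simpa, by simpa, fun j => ?_⟩
  rw [Walk.support_copy]
  simpa [sideVert, show (j : ℕ) + 1 < k by omega] using hmem (j + 1) (by omega)

end GraphU

end

/-- If `f₁` and `f₂` are two embeddings (injective graph homomorphisms) of `U` into a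
    graph `G` with no cycles of length at most `2k` (`k ≥ 2`), and `f₁(x⁰ᵢ) = f₂(x⁰ᵢ)`
    for all `i ∈ ℤ₅`, then `f₁ = f₂`. -/
theorem graphU_rigid (k : ℕ) (hk : 2 ≤ k) {V : Type*} (G : SimpleGraph V)
    (hG : NoShortCycles k G) (f₁ f₂ : GraphU k →g G)
    (h₁ : Function.Injective f₁) (h₂ : Function.Injective f₂)
    (hx : ∀ i : Fin 5, f₁ (Sum.inl i) = f₂ (Sum.inl i)) : f₁ = f₂ := by
  have side : ∀ m, (∀ i u, IsXVert k m i u → f₁ u = f₂ u) →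
      ∀ i j, f₁ (.inr (m, i, j)) = f₂ (.inr (m, i, j)) := by
    intro m hm i j
    obtain ⟨u, hu⟩ := exists_isXVert hk m i
    obtain ⟨v, hv⟩ := exists_isXVert hk m (i + 1)
    obtain ⟨p, hp, hpk, hmem⟩ := GraphU.exists_isPath_side hk hu hv
    exact hG.apply_eq_of_mem_support h₁ h₂ hp hpk.le (hm i u hu) (hm _ v hv) _ (hmem j)
  have corners : ∀ m i u, IsXVert k m i u → f₁ u = f₂ u := by
    intro m
    induction m with
    | zero =>
      rintro i u (⟨-, rfl⟩ | ⟨_, _, h, -⟩)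
      · exact hx i
      · omega
    | succ m ih =>
      rintro i u (⟨h, -⟩ | ⟨m', j, hm, -, rfl⟩)
      · omega
      · obtain rfl : m = m' := by omega
        exact side m ih _ j
  ext (i | ⟨m, i, j⟩)
  · exact hx i
  · exact side m (corners m) i j
end
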